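/- arXiv:2310.09358 — 8 statements merged into one kernel-verified Lean document; each statement's English description precedes it below -/
import Mathlib

section
/- Let Φ ∈ ℝ^{K×d} have full column rank d, let μ ∈ ℝ^K, and let Λ = diag(α(1),…,α(K)) be a diagonal positive-semidefinite matrix such that Φ^⊤ΛΦ is invertible. Then the weighted least-squares solution is an explicit convex combination of the basic solutions: (Φ^⊤ΛΦ)^{-1}Φ^⊤Λμ = Σ_{J ∈ J(Φ)} w_J · Φ_J^{-1}μ_J, where the weights w_J = det(Λ_J)·det(Φ_J)² / Σ_{J' ∈ J(Φ)} det(Λ_{J'})·det(Φ_{J'})² are nonnegative and sum to 1 (here Λ_J is the d×d diagonal submatrix of Λ on the rows J). -/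
open Matrix BigOperators
open scoped Classical

noncomputable section

/-- A sampling distribution weight vector giving rise to `Λ = diag α`. -/
def IsSimplex {K : ℕ} (α : Fin K → ℝ) : Prop :=
  (∀ i, 0 ≤ α i) ∧ ∑ i, α i = 1

/-- The weighted Gram matrix `Φᵀ Λ Φ` with `Λ = diag α`. -/
def gram {K d : ℕ} (Φ : Matrix (Fin K) (Fin d) ℝ) (α : Fin K → ℝ) :
    Matrix (Fin d) (Fin d) ℝ :=
  Φᵀ * Matrix.diagonal α * Φ

/-- The weighted least-squares solution `(Φᵀ Λ Φ)⁻¹ Φᵀ Λ μ` with `Λ = diag α`. -/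
def modelEst {K d : ℕ} (Φ : Matrix (Fin K) (Fin d) ℝ) (α : Fin K → ℝ) (μ : Fin K → ℝ) :
    Fin d → ℝ :=
  (gram Φ α)⁻¹ *ᵥ (Φᵀ *ᵥ (Matrix.diagonal α *ᵥ μ))

/-- The `d × d` row-submatrix `Φ_J` of `Φ` on the (strictly monotone) row-index set `J`. -/
def subRows {K d : ℕ} (Φ : Matrix (Fin K) (Fin d) ℝ) (J : Fin d → Fin K) :
    Matrix (Fin d) (Fin d) ℝ :=
  Φ.submatrix J id

/-- The basic solution `Φ_J⁻¹ μ_J`. -/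
def basicSol {K d : ℕ} (Φ : Matrix (Fin K) (Fin d) ℝ) (J : Fin d → Fin K) (μ : Fin K → ℝ) :
    Fin d → ℝ :=
  (subRows Φ J)⁻¹ *ᵥ (μ ∘ J)

/-- **Cauchy–Binet formula** over `ℝ` with strictly monotone index maps. -/
theorem cauchyBinet {d K : ℕ} (A : Matrix (Fin d) (Fin K) ℝ) (B : Matrix (Fin K) (Fin d) ℝ) :
    det (A * B) = ∑ J ∈ Finset.univ.filter (fun J : Fin d → Fin K => StrictMono J),
      det (A.submatrix id J) * det (B.submatrix J id) := by
  have step1 : det (A * B) = ∑ f : Fin d → Fin K, (∏ i, A i (f i)) * det (B.submatrix f id) := by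
    have h : (A * B) = Matrix.of (fun i => ∑ k, A i k • B k) := by
      ext i j; simp [Matrix.mul_apply]
    rw [h]
    have h2 : det (Matrix.of fun i => ∑ k, A i k • B k)
        = (Matrix.detRowAlternating : (Fin d → ℝ) [⋀^Fin d]→ₗ[ℝ] ℝ).toMultilinearMap
          (fun i => ∑ k, A i k • B k) := rfl
    rw [h2, MultilinearMap.map_sum (Matrix.detRowAlternating.toMultilinearMap)
        (g := fun (i : Fin d) (k : Fin K) => A i k • B k)]
    refine Finset.sum_congr rfl fun f _ => ?_
    rw [MultilinearMap.map_smul_univ]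
    rfl
  have step2 : ∑ f : Fin d → Fin K, (∏ i, A i (f i)) * det (B.submatrix f id)
      = ∑ f ∈ Finset.univ.filter (fun f : Fin d → Fin K => Function.Injective f),
          (∏ i, A i (f i)) * det (B.submatrix f id) := by
    refine (Finset.sum_subset (Finset.filter_subset _ _) fun f _ hf => ?_).symm
    simp only [Finset.mem_filter, Finset.mem_univ, true_and] at hf
    rw [Function.not_injective_iff] at hf
    obtain ⟨i, j, hBij, hij⟩ := hf
    have : det (B.submatrix f id) = 0 := by
      apply Matrix.det_zero_of_row_eq hij
      ext k; simp [Matrix.submatrix, hBij]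
    rw [this, mul_zero]
  rw [step1, step2]
  have key : ∀ J ∈ Finset.univ.filter (fun J : Fin d → Fin K => StrictMono J),
      det (A.submatrix id J) * det (B.submatrix J id)
        = ∑ σ : Equiv.Perm (Fin d), (∏ i, A i (J (σ i))) * det (B.submatrix (J ∘ σ) id) := by
    intro J hJ
    simp only [Finset.mem_filter, Finset.mem_univ, true_and] at hJ
    have hperm : ∀ σ : Equiv.Perm (Fin d),
        det (B.submatrix (J ∘ σ) id) = Equiv.Perm.sign σ * det (B.submatrix J id) := by
      intro σ
      have : B.submatrix (J ∘ σ) id = (B.submatrix J id).submatrix σ id := by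
        ext i j; rfl
      rw [this]
      have := Matrix.det_permute σ (B.submatrix J id)
      simpa [Matrix.submatrix] using this
    calc det (A.submatrix id J) * det (B.submatrix J id)
        = (∑ σ : Equiv.Perm (Fin d), (Equiv.Perm.sign σ : ℝ) * ∏ i, A i (J (σ i)))
            * det (B.submatrix J id) := by
          congr 1
          rw [← Matrix.det_transpose, Matrix.det_apply']
          refine Finset.sum_congr rfl fun σ _ => ?_
          congr 1
      _ = ∑ σ : Equiv.Perm (Fin d), (∏ i, A i (J (σ i))) * det (B.submatrix (J ∘ σ) id) := by
          rw [Finset.sum_mul]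
          refine Finset.sum_congr rfl fun σ _ => ?_
          rw [hperm σ]; ring
  rw [Finset.sum_congr rfl key, Finset.sum_sigma']
  refine (Finset.sum_nbij' (fun p => p.1 ∘ p.2)
      (fun f => ⟨f ∘ Tuple.sort f, (Tuple.sort f)⁻¹⟩) ?_ ?_ ?_ ?_ ?_).symm
  · rintro ⟨J, σ⟩ hp
    simp only [Finset.mem_sigma, Finset.mem_filter, Finset.mem_univ, true_and] at hp ⊢
    exact hp.1.injective.comp σ.injective
  · intro f hf
    simp only [Finset.mem_filter, Finset.mem_univ, true_and] at hf
    simp only [Finset.mem_sigma, Finset.mem_filter, Finset.mem_univ, true_and, and_true]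
    exact (Tuple.monotone_sort f).strictMono_of_injective (hf.comp (Tuple.sort f).injective)
  · rintro ⟨J, σ⟩ hp
    simp only [Finset.mem_sigma, Finset.mem_filter, Finset.mem_univ, true_and] at hp
    have hJs : (J ∘ σ) ∘ Tuple.sort (J ∘ σ) = J := by
      rw [Tuple.comp_perm_comp_sort_eq_comp_sort (σ := σ) (f := J)]
      rw [show Tuple.sort J = Equiv.refl _ from Tuple.sort_eq_refl_iff_monotone.2 hp.1.monotone]
      rfl
    have hσ : (Tuple.sort (J ∘ ⇑σ))⁻¹ = σ := by
      have h1 : ∀ i, J (σ (Tuple.sort (J ∘ ⇑σ) i)) = J i := fun i => congrFun hJs i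
      have h2 : ∀ i, σ (Tuple.sort (J ∘ ⇑σ) i) = i := fun i => hp.1.injective (h1 i)
      ext i
      have h3 := h2 ((Tuple.sort (J ∘ ⇑σ))⁻¹ i)
      simp only [Equiv.Perm.inv_def, Equiv.apply_symm_apply] at h3
      exact congrArg Fin.val h3.symm
    exact Sigma.ext hJs (heq_of_eq hσ)
  · intro f hf
    ext i
    simp
  · rintro ⟨J, σ⟩ hp
    rfl

theorem updateColumn_mul_mulVec {d K : ℕ} (M : Matrix (Fin d) (Fin K) ℝ)
    (N : Matrix (Fin K) (Fin d) ℝ) (v : Fin K → ℝ) (i : Fin d) :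
    (M * N).updateCol i (M *ᵥ v) = M * (N.updateCol i v) := by
  ext a j
  by_cases h : j = i
  · subst h
    simp [Matrix.updateCol_apply, Matrix.mul_apply, Matrix.mulVec, dotProduct]
  · simp [Matrix.updateCol_apply, h, Matrix.mul_apply]

theorem submatrix_updateColumn {d K : ℕ} (Φ : Matrix (Fin K) (Fin d) ℝ)
    (J : Fin d → Fin K) (μ : Fin K → ℝ) (i : Fin d) :
    (Φ.updateCol i μ).submatrix J id = (Φ.submatrix J id).updateCol i (μ ∘ J) := by
  ext a j
  by_cases h : j = i
  · subst h; simp [Matrix.updateCol_apply]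
  · simp [Matrix.updateCol_apply, h]

theorem det_weighted_cols {d K : ℕ} (Φ : Matrix (Fin K) (Fin d) ℝ) (α : Fin K → ℝ)
    (J : Fin d → Fin K) :
    det ((Φᵀ * Matrix.diagonal α).submatrix id J)
      = (∏ i, α (J i)) * det (Φ.submatrix J id) := by
  have h : (Φᵀ * Matrix.diagonal α).submatrix id J
      = (Φ.submatrix J id)ᵀ * Matrix.diagonal (α ∘ J) := by
    ext a j
    simp [Matrix.mul_diagonal]
  rw [h, Matrix.det_mul, Matrix.det_transpose, Matrix.det_diagonal]
  ring_nf
  rfl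

/-- Forsgren.  For `Φ` of full column rank, `μ ∈ ℝ^K` and a diagonal
PSD matrix `Λ = diag α` with `ΦᵀΛΦ` invertible, the weighted least-squares solution is the
explicit convex combination `Σ_{J ∈ J(Φ)} w_J • Φ_J⁻¹ μ_J` of the basic solutions, where
`w_J = det Λ_J · (det Φ_J)² / Σ_{J'} det Λ_{J'} · (det Φ_{J'})²`; the weights are
nonnegative and sum to `1`.  Index sets `J ⊆ {1,…,K}`, `|J| = d`, are encoded as strictly
monotone maps `Fin d → Fin K`, and `det Λ_J = ∏ i, α (J i)`. -/
theorem forsgren_convex_combination {K d : ℕ} (hd : 0 < d) (hKd : d < K)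
    (Φ : Matrix (Fin K) (Fin d) ℝ) (hrank : Φ.rank = d)
    (μ : Fin K → ℝ) (α : Fin K → ℝ) (hα : ∀ i, 0 ≤ α i)
    (hinv : IsUnit (gram Φ α).det) :
    let JSet : Finset (Fin d → Fin K) :=
      Finset.univ.filter fun J => StrictMono J ∧ IsUnit (subRows Φ J).det
    let wt : (Fin d → Fin K) → ℝ :=
      fun J => (∏ i, α (J i)) * ((subRows Φ J).det) ^ 2
    let Z : ℝ := ∑ J ∈ JSet, wt J
    (modelEst Φ α μ = ∑ J ∈ JSet, (wt J / Z) • basicSol Φ J μ) ∧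
      (∀ J ∈ JSet, 0 ≤ wt J / Z) ∧ (∑ J ∈ JSet, wt J / Z = 1) := by
  intro JSet wt Z
  set A : Matrix (Fin d) (Fin K) ℝ := Φᵀ * Matrix.diagonal α with hA
  set SM : Finset (Fin d → Fin K) :=
    Finset.univ.filter (fun J : Fin d → Fin K => StrictMono J) with hSM
  have hgram : gram Φ α = A * Φ := rfl
  have hsub : JSet ⊆ SM := by
    intro J hJ
    simp only [hSM, JSet, Finset.mem_filter, Finset.mem_univ, true_and] at hJ ⊢
    exact hJ.1
  have hwt0 : ∀ J ∈ SM, J ∉ JSet → wt J = 0 := by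
    intro J hJs hJn
    simp only [hSM, Finset.mem_filter, Finset.mem_univ, true_and] at hJs
    simp only [JSet, Finset.mem_filter, Finset.mem_univ, true_and, not_and] at hJn
    have hdet0 : (subRows Φ J).det = 0 := by
      by_contra h
      exact hJn hJs (isUnit_iff_ne_zero.2 h)
    simp [wt, hdet0]
  have hZSM : Z = ∑ J ∈ SM, wt J := Finset.sum_subset hsub (fun J hJ hJn => hwt0 J hJ hJn)
  have hZdet : Z = (gram Φ α).det := by
    rw [hZSM, hgram, cauchyBinet]
    refine Finset.sum_congr rfl fun J _ => ?_
    rw [det_weighted_cols]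
    simp only [wt, subRows]
    ring
  have hZ0 : Z ≠ 0 := by
    rw [hZdet]
    exact IsUnit.ne_zero (by simpa using hinv)
  have hdet0 : ∀ J ∈ SM, J ∉ JSet → (subRows Φ J).det = 0 := by
    intro J hJs hJn
    simp only [hSM, Finset.mem_filter, Finset.mem_univ, true_and] at hJs
    simp only [JSet, Finset.mem_filter, Finset.mem_univ, true_and, not_and] at hJn
    by_contra h
    exact hJn hJs (isUnit_iff_ne_zero.2 h)
  -- the key numerator identity
  have hnum : (gram Φ α).adjugate *ᵥ (A *ᵥ μ)
      = ∑ J ∈ SM, ((∏ i, α (J i)) * (subRows Φ J).det) •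
          ((subRows Φ J).adjugate *ᵥ (μ ∘ J)) := by
    funext i
    have lhs : ((gram Φ α).adjugate *ᵥ (A *ᵥ μ)) i
        = det ((gram Φ α).updateCol i (A *ᵥ μ)) := by
      rw [← Matrix.cramer_eq_adjugate_mulVec, Matrix.cramer_apply]
    rw [lhs, hgram, updateColumn_mul_mulVec, cauchyBinet]
    rw [Finset.sum_apply]
    refine Finset.sum_congr rfl fun J _ => ?_
    rw [submatrix_updateColumn, det_weighted_cols]
    have : ((subRows Φ J).adjugate *ᵥ (μ ∘ J)) i
        = det ((Φ.submatrix J id).updateCol i (μ ∘ J)) := by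
      rw [← Matrix.cramer_eq_adjugate_mulVec, Matrix.cramer_apply]; rfl
    simp only [subRows] at this
    simp only [Pi.smul_apply, smul_eq_mul, subRows, this]
  -- the main identity
  have hmain : modelEst Φ α μ = ∑ J ∈ JSet, (wt J / Z) • basicSol Φ J μ := by
    have hb : Φᵀ *ᵥ (Matrix.diagonal α *ᵥ μ) = A *ᵥ μ := by
      rw [hA, ← Matrix.mulVec_mulVec]
    rw [modelEst, hb, Matrix.inv_def, Ring.inverse_eq_inv, Matrix.smul_mulVec, hnum,
      ← hZdet]
    rw [Finset.smul_sum]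
    rw [← Finset.sum_subset hsub (fun J hJ hJn => by
      simp [hdet0 J hJ hJn])]
    refine Finset.sum_congr rfl fun J hJ => ?_
    have hJu : IsUnit (subRows Φ J).det := by
      simp only [JSet, Finset.mem_filter, Finset.mem_univ, true_and] at hJ
      exact hJ.2
    have hdJ : (subRows Φ J).det ≠ 0 := hJu.ne_zero
    rw [basicSol, Matrix.inv_def, Ring.inverse_eq_inv, Matrix.smul_mulVec,
      smul_smul, smul_smul]
    congr 1
    simp only [wt]
    field_simp
  refine ⟨hmain, fun J hJ => ?_, ?_⟩
  · apply div_nonneg _ _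
    · exact mul_nonneg (Finset.prod_nonneg fun i _ => hα (J i)) (sq_nonneg _)
    · have : 0 ≤ Z := Finset.sum_nonneg fun J _ =>
        mul_nonneg (Finset.prod_nonneg fun i _ => hα (J i)) (sq_nonneg _)
      exact this
  · rw [← Finset.sum_div, div_self hZ0]

end
end

section
/- Let Φ ∈ ℝ^{K×d} have full column rank d and let μ ∈ ℝ^K. For every diagonal positive-semidefinite matrix Λ with Φ^⊤ΛΦ invertible, the weighted least-squares solution (Φ^⊤ΛΦ)^{-1}Φ^⊤Λμ lies in the convex hull of the set of basic solutions {Φ_J^{-1}μ_J : J ∈ J(Φ)}. -/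
open Matrix BigOperators
open scoped Classical

noncomputable section

/-- Any injective map `Fin d → Fin K` factors uniquely as a strictly monotone map composed
with a permutation. -/
lemma inj_factor_bijective {d K : ℕ} :
    Function.Bijective (fun p : {J : Fin d → Fin K // StrictMono J} × Equiv.Perm (Fin d) =>
      (⟨p.1.1 ∘ p.2, p.1.2.injective.comp p.2.injective⟩ :
        {f : Fin d → Fin K // Function.Injective f})) := by
  constructor
  · rintro ⟨⟨J₁, hJ₁⟩, σ₁⟩ ⟨⟨J₂, hJ₂⟩, σ₂⟩ h
    have h' : J₁ ∘ σ₁ = J₂ ∘ σ₂ := congrArg Subtype.val h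
    have hr : Set.range J₁ = Set.range J₂ := by
      rw [← σ₁.surjective.range_comp J₁, ← σ₂.surjective.range_comp J₂, h']
    have inst : WellFoundedLT (Fin d) := inferInstance
    have hJ : J₁ = J₂ := (@StrictMono.range_inj (Fin d) (Fin K) _ _ inst _ _ hJ₁ hJ₂).mp hr
    subst hJ
    have hσ : σ₁ = σ₂ := Equiv.ext fun i => hJ₁.injective (congrFun h' i)
    simp [hσ]
  · rintro ⟨f, hf⟩
    set s : Finset (Fin K) := Finset.image f Finset.univ with hs_def
    have hs : s.card = d := by
      rw [hs_def, Finset.card_image_of_injective _ hf, Finset.card_univ, Fintype.card_fin]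
    have hmem : ∀ i, f i ∈ s := fun i => Finset.mem_image_of_mem f (Finset.mem_univ i)
    set J : Fin d → Fin K := ⇑(s.orderEmbOfFin hs) with hJ_def
    have hJmono : StrictMono J := (s.orderEmbOfFin hs).strictMono
    set g : Fin d → Fin d := fun i => (s.orderIsoOfFin hs).symm ⟨f i, hmem i⟩ with hg_def
    have hJg : ∀ i, J (g i) = f i := by
      intro i
      have h2 : ((s.orderIsoOfFin hs) ((s.orderIsoOfFin hs).symm ⟨f i, hmem i⟩) : Fin K) = f i :=
        congrArg Subtype.val ((s.orderIsoOfFin hs).apply_symm_apply ⟨f i, hmem i⟩)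
      rwa [Finset.coe_orderIsoOfFin_apply] at h2
    have hginj : Function.Injective g := by
      intro a b hab
      apply hf
      rw [← hJg a, ← hJg b, hab]
    refine ⟨⟨⟨J, hJmono⟩, Equiv.ofBijective g (Finite.injective_iff_bijective.mp hginj)⟩, ?_⟩
    exact Subtype.ext (funext fun i => hJg i)

/-- The Cauchy–Binet formula over `ℝ`. -/
lemma cauchy_binet {d K : ℕ} (A : Matrix (Fin d) (Fin K) ℝ) (B : Matrix (Fin K) (Fin d) ℝ) :
    (A * B).det = ∑ J : {J : Fin d → Fin K // StrictMono J},
      (A.submatrix id J.1).det * (B.submatrix J.1 id).det := by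
  have step1 : (A * B).det =
      ∑ f : Fin d → Fin K, (∏ i, A i (f i)) * (B.submatrix f id).det := by
    have h1 : (A * B).det =
        (Matrix.detRowAlternating (R := ℝ) (n := Fin d)).toMultilinearMap
          (fun i => ∑ k, A i k • B k) := by
      congr 1
      ext i j
      simp [Matrix.mul_apply]
    rw [h1, MultilinearMap.map_sum]
    refine Finset.sum_congr rfl fun f _ => ?_
    have h2 : (Matrix.detRowAlternating (R := ℝ) (n := Fin d)).toMultilinearMap
          (fun i => A i (f i) • B (f i)) =
        Matrix.det (Matrix.of fun i j => A i (f i) * (B.submatrix f id) i j) := rfl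
    rw [h2, Matrix.det_mul_column]
  have step2 : (A * B).det =
      ∑ f : {f : Fin d → Fin K // Function.Injective f},
        (∏ i, A i (f.1 i)) * (B.submatrix f.1 id).det := by
    rw [step1, ← Finset.sum_subtype (Finset.univ.filter (fun f : Fin d → Fin K =>
      Function.Injective f)) (by simp) (fun f => (∏ i, A i (f i)) * (B.submatrix f id).det)]
    refine (Finset.sum_subset (Finset.subset_univ _) fun f _ hf => ?_).symm
    simp only [Finset.mem_filter, Finset.mem_univ, true_and] at hf
    rw [Function.not_injective_iff] at hf
    obtain ⟨i, j, hij, hne⟩ := hf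
    have : (B.submatrix f id).det = 0 :=
      Matrix.det_zero_of_row_eq hne (by ext k; simp [hij])
    rw [this, mul_zero]
  rw [step2, ← Fintype.sum_bijective _ inj_factor_bijective _
    (fun f => (∏ i, A i (f.1 i)) * (B.submatrix f.1 id).det) (fun p => rfl)]
  rw [Fintype.sum_prod_type]
  refine Finset.sum_congr rfl fun J _ => ?_
  dsimp only
  have hdetA : (A.submatrix id J.1).det =
      ∑ σ : Equiv.Perm (Fin d), ((Equiv.Perm.sign σ : ℤ) : ℝ) * ∏ i, A i (J.1 (σ i)) := by
    rw [← Matrix.det_transpose, Matrix.det_apply']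
    rfl
  rw [hdetA, Finset.sum_mul]
  refine Finset.sum_congr rfl fun σ _ => ?_
  have hsub : B.submatrix (J.1 ∘ ⇑σ) id = (B.submatrix J.1 id).submatrix (⇑σ) id := by
    rw [Matrix.submatrix_submatrix]
    rfl
  rw [hsub, Matrix.det_permute]
  simp only [Function.comp_apply]
  ring

/-- For `Φ` of full column rank and any diagonal PSD `Λ = diag α`
with `ΦᵀΛΦ` invertible, the weighted least-squares solution `(ΦᵀΛΦ)⁻¹ΦᵀΛμ` lies in the
convex hull of the basic solutions `{Φ_J⁻¹ μ_J : J ∈ J(Φ)}` (index sets with invertible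
`d × d` row-submatrix, encoded as strictly monotone maps `Fin d → Fin K`). -/
theorem wls_mem_convexHull_basicSolutions {K d : ℕ} (hd : 0 < d) (hKd : d < K)
    (Φ : Matrix (Fin K) (Fin d) ℝ) (hrank : Φ.rank = d)
    (μ : Fin K → ℝ) (α : Fin K → ℝ) (hα : ∀ i, 0 ≤ α i)
    (hinv : IsUnit (gram Φ α).det) :
    modelEst Φ α μ ∈
      convexHull ℝ {x : Fin d → ℝ |
        ∃ J : Fin d → Fin K, StrictMono J ∧ IsUnit (subRows Φ J).det ∧ x = basicSol Φ J μ} := by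
  set A : Matrix (Fin d) (Fin K) ℝ := Φᵀ * Matrix.diagonal α with hA
  set b : Fin d → ℝ := A *ᵥ μ with hb
  have hG : gram Φ α = A * Φ := rfl
  set w : {J : Fin d → Fin K // StrictMono J} → ℝ :=
    fun J => (∏ i, α (J.1 i)) * (subRows Φ J.1).det ^ 2 with hw_def
  have hα' : ∀ J : {J : Fin d → Fin K // StrictMono J}, 0 ≤ ∏ i, α (J.1 i) :=
    fun J => Finset.prod_nonneg fun i _ => hα _
  have hw0 : ∀ J, 0 ≤ w J := fun J => mul_nonneg (hα' J) (sq_nonneg _)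
  -- determinant of the column-submatrices of A
  have detA_J : ∀ J : {J : Fin d → Fin K // StrictMono J},
      (A.submatrix id J.1).det = (∏ i, α (J.1 i)) * (subRows Φ J.1).det := by
    intro J
    have h1 : A.submatrix id J.1 =
        Matrix.of fun r c => α (J.1 c) * ((subRows Φ J.1)ᵀ) r c := by
      ext r c
      simp [hA, Matrix.mul_diagonal, subRows, mul_comm]
    rw [h1, Matrix.det_mul_row, Matrix.det_transpose]
  -- the total mass is det (gram Φ α)
  have hsum : (gram Φ α).det = ∑ J : {J : Fin d → Fin K // StrictMono J}, w J := by
    rw [hG, cauchy_binet]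
    refine Finset.sum_congr rfl fun J _ => ?_
    rw [detA_J J, hw_def]
    have : (Φ.submatrix J.1 id).det = (subRows Φ J.1).det := rfl
    rw [this]
    ring
  -- the numerators
  have hnum : ∀ i : Fin d, ((gram Φ α).updateCol i b).det =
      ∑ J : {J : Fin d → Fin K // StrictMono J}, w J * basicSol Φ J.1 μ i := by
    intro i
    have hupd : (gram Φ α).updateCol i b = A * (Φ.updateCol i μ) := by
      ext r c
      by_cases hc : c = i
      · subst hc
        simp [Matrix.updateCol_apply, Matrix.mul_apply, hb, Matrix.mulVec, dotProduct]
      · simp [Matrix.updateCol_apply, hc, hG, Matrix.mul_apply]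
    rw [hupd, cauchy_binet]
    refine Finset.sum_congr rfl fun J _ => ?_
    have hsubupd : (Φ.updateCol i μ).submatrix J.1 id =
        (subRows Φ J.1).updateCol i (μ ∘ J.1) := by
      ext r c
      by_cases hc : c = i
      · subst hc
        simp [Matrix.updateCol_apply, subRows]
      · simp [Matrix.updateCol_apply, hc, subRows]
    rw [detA_J J, hsubupd, ← Matrix.cramer_apply]
    by_cases hdet : (subRows Φ J.1).det = 0
    · rw [hw_def]
      simp [hdet]
    · have hunit : IsUnit (subRows Φ J.1).det := isUnit_iff_ne_zero.mpr hdet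
      have hbs : basicSol Φ J.1 μ i =
          ((subRows Φ J.1).det)⁻¹ * Matrix.cramer (subRows Φ J.1) (μ ∘ J.1) i := by
        rw [basicSol, Matrix.inv_def, Matrix.smul_mulVec,
          ← Matrix.cramer_eq_adjugate_mulVec, Ring.inverse_eq_inv']
        simp
      rw [hbs, hw_def]
      field_simp
  -- coordinates of the weighted least-squares solution
  have hdetG : (gram Φ α).det ≠ 0 := IsUnit.ne_zero hinv
  have hmodel : modelEst Φ α μ = ((gram Φ α).det)⁻¹ •
      ∑ J : {J : Fin d → Fin K // StrictMono J}, w J • basicSol Φ J.1 μ := by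
    funext i
    have hb' : Φᵀ *ᵥ (Matrix.diagonal α *ᵥ μ) = b := by
      rw [hb, hA, Matrix.mulVec_mulVec]
    have h1 : modelEst Φ α μ i = ((gram Φ α).det)⁻¹ * ((gram Φ α).updateCol i b).det := by
      rw [modelEst, hb', Matrix.inv_def, Matrix.smul_mulVec,
        ← Matrix.cramer_eq_adjugate_mulVec, Ring.inverse_eq_inv']
      simp [Matrix.cramer_apply]
    rw [h1, hnum i]
    simp [Finset.sum_apply, mul_comm]
  -- assemble the convex combination
  set t : Finset {J : Fin d → Fin K // StrictMono J} :=
    Finset.univ.filter (fun J => (subRows Φ J.1).det ≠ 0) with ht_def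
  have hwt : ∑ J ∈ t, w J = (gram Φ α).det := by
    rw [ht_def, Finset.sum_filter_of_ne, ← hsum]
    intro J _ hwJ hdet
    exact hwJ (by rw [hw_def]; simp [hdet])
  have hzt : ∑ J ∈ t, w J • basicSol Φ J.1 μ =
      ∑ J : {J : Fin d → Fin K // StrictMono J}, w J • basicSol Φ J.1 μ := by
    rw [ht_def, Finset.sum_filter_of_ne]
    intro J _ hwJ hdet
    exact hwJ (by rw [hw_def]; simp [hdet])
  have hcm : modelEst Φ α μ = t.centerMass w (fun J => basicSol Φ J.1 μ) := by
    rw [Finset.centerMass, hwt, hzt, hmodel]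
  rw [hcm]
  refine Finset.centerMass_mem_convexHull t (fun J _ => hw0 J) ?_ ?_
  · rw [hwt]
    rcases lt_or_eq_of_le (by rw [hsum]; exact Finset.sum_nonneg fun J _ => hw0 J :
      (0:ℝ) ≤ (gram Φ α).det) with h | h
    · exact h
    · exact absurd h.symm hdetG
  · intro J hJ
    rw [ht_def, Finset.mem_filter] at hJ
    exact ⟨J.1, J.2, isUnit_iff_ne_zero.mpr hJ.2, rfl⟩

end
end

section
/- (Characterization of the robust observation region.) For any reward vector μ ∈ R_k (i.e., with optimal arm k), μ belongs to the robust observation region C_k if and only if for every index set J ∈ J(Φ) the basic solution Φ_J^{-1}μ_J belongs to the robust parameter region Θ_k. -/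
open Matrix BigOperators
open scoped Classical

noncomputable section

/-- The greedy region of arm `k`: reward vectors whose (strictly) best arm is `k`. -/
def greedyRegion (K : ℕ) (k : Fin K) : Set (Fin K → ℝ) :=
  {μ | ∀ i, i ≠ k → μ i < μ k}

/-- The robust parameter region `Θ_k`. -/
def robustParam {K d : ℕ} (Φ : Matrix (Fin K) (Fin d) ℝ) (k : Fin K) : Set (Fin d → ℝ) :=
  {θ | Φ.mulVec θ ∈ greedyRegion K k}

/-- The robust observation region `C_k`. -/
def robustObs {K d : ℕ} (Φ : Matrix (Fin K) (Fin d) ℝ) (k : Fin K) : Set (Fin K → ℝ) :=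
  {μ | μ ∈ greedyRegion K k ∧
    ∀ α : Fin K → ℝ, IsSimplex α → IsUnit (gram Φ α).det →
      modelEst Φ α μ ∈ robustParam Φ k}

section Aux

variable {K d : ℕ}

/-- Auxiliary: a sum over injective tuples equals a double sum over strictly monotone
tuples and permutations. -/
lemma aux_sum_injective_eq (t : (Fin d → Fin K) → ℝ) :
    ∑ p ∈ Finset.univ.filter (fun p : Fin d → Fin K => Function.Injective p), t p
      = ∑ J ∈ Finset.univ.filter (fun J : Fin d → Fin K => StrictMono J),
          ∑ σ : Equiv.Perm (Fin d), t (J ∘ σ) := by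
  rw [← Finset.sum_product']
  symm
  refine Finset.sum_bij (fun x _ => x.1 ∘ x.2) ?_ ?_ ?_ ?_
  · rintro ⟨J, σ⟩ hx
    simp only [Finset.mem_product, Finset.mem_filter, Finset.mem_univ, true_and] at hx ⊢
    exact hx.1.injective.comp σ.injective
  · rintro ⟨J₁, σ₁⟩ hx₁ ⟨J₂, σ₂⟩ hx₂ h
    simp only [Finset.mem_product, Finset.mem_filter, Finset.mem_univ, true_and,
      and_true] at hx₁ hx₂
    simp only at h
    have hr : Set.range J₁ = Set.range J₂ := by
      rw [← σ₁.surjective.range_comp J₁, ← σ₂.surjective.range_comp J₂, h]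
    have hJ : J₁ = J₂ := by
      haveI : WellFoundedLT (Fin d) := inferInstance
      exact (hx₁.range_inj hx₂).mp hr
    subst hJ
    have hσ : σ₁ = σ₂ := Equiv.ext fun x => hx₁.injective (congrFun h x)
    rw [hσ]
  · intro b hb
    simp only [Finset.mem_filter, Finset.mem_univ, true_and] at hb
    refine ⟨⟨b ∘ Tuple.sort b, (Tuple.sort b)⁻¹⟩, ?_, ?_⟩
    · simp only [Finset.mem_product, Finset.mem_filter, Finset.mem_univ, true_and, and_true]
      exact (Tuple.monotone_sort b).strictMono_of_injective
        (hb.comp (Tuple.sort b).injective)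
    · funext x
      simp [Equiv.Perm.inv_def]
  · intro a ha
    rfl

/-- Auxiliary Cauchy–Binet-type expansion of `det (Aᵀ Λ B)`. -/
lemma aux_det_expand (A B : Matrix (Fin K) (Fin d) ℝ) (α : Fin K → ℝ) :
    (Aᵀ * Matrix.diagonal α * B).det
      = ∑ J ∈ Finset.univ.filter (fun J : Fin d → Fin K => StrictMono J),
          (∏ j, α (J j)) * ((A.submatrix J id).det * (B.submatrix J id).det) := by
  have step1 : (Aᵀ * Matrix.diagonal α * B).det
      = ∑ p : Fin d → Fin K, (∏ c, α (p c) * B (p c) c) * (A.submatrix p id).det := by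
    have entry : ∀ r c, (Aᵀ * Matrix.diagonal α * B) r c = ∑ i, A i r * α i * B i c := by
      intro r c
      rw [Matrix.mul_apply]
      simp_rw [Matrix.mul_diagonal, Matrix.transpose_apply]
    rw [Matrix.det_apply']
    simp_rw [entry, Finset.prod_univ_sum, Fintype.piFinset_univ, Finset.mul_sum]
    rw [Finset.sum_comm]
    refine Finset.sum_congr rfl fun p _ => ?_
    rw [← Matrix.det_transpose (A.submatrix p id), Matrix.det_apply', Finset.mul_sum]
    refine Finset.sum_congr rfl fun σ _ => ?_
    simp only [Finset.prod_mul_distrib, Matrix.transpose_apply, Matrix.submatrix_apply, id]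
    ring
  rw [step1]
  rw [← Finset.sum_filter_of_ne (p := fun p : Fin d → Fin K => Function.Injective p)
    (fun p _ hne => by
      by_contra hinj
      obtain ⟨x, y, hxy, hne'⟩ : ∃ x y, p x = p y ∧ x ≠ y :=
        Function.not_injective_iff.mp hinj
      have : (A.submatrix p id).det = 0 :=
        Matrix.det_zero_of_row_eq hne' (by funext c; simp [hxy])
      exact hne (by rw [this, mul_zero]))]
  rw [aux_sum_injective_eq]
  refine Finset.sum_congr rfl fun J hJ => ?_
  have hJm : StrictMono J := by simpa using hJ
  have hperσ : ∀ σ : Equiv.Perm (Fin d),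
      (∏ c, α ((J ∘ σ) c) * B ((J ∘ σ) c) c) * (A.submatrix (J ∘ σ) id).det
        = ((∏ j, α (J j)) * (A.submatrix J id).det)
            * (((Equiv.Perm.sign σ : ℤ) : ℝ) * ∏ c, B (J (σ c)) c) := by
    intro σ
    have h1 : (A.submatrix (J ∘ σ) id).det
        = ((Equiv.Perm.sign σ : ℤ) : ℝ) * (A.submatrix J id).det := by
      have : A.submatrix (J ∘ σ) id = (A.submatrix J id).submatrix σ id := by
        rw [Matrix.submatrix_submatrix]; rfl
      rw [this, Matrix.det_permute]
    have h2 : (∏ c, α ((J ∘ σ) c)) = ∏ j, α (J j) := Equiv.prod_comp σ fun j => α (J j)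
    rw [Finset.prod_mul_distrib, h1, h2]
    simp only [Function.comp_apply]
    ring
  simp_rw [hperσ]
  rw [← Finset.mul_sum, Matrix.det_apply' (B.submatrix J id)]
  simp only [Matrix.submatrix_apply, id]
  ring

/-- Auxiliary: the update-column identity used for Cramer's rule. -/
lemma aux_gram_updateColumn (Φ : Matrix (Fin K) (Fin d) ℝ) (α : Fin K → ℝ) (μ : Fin K → ℝ)
    (m : Fin d) :
    (gram Φ α).updateCol m (Φᵀ *ᵥ (Matrix.diagonal α *ᵥ μ))
      = Φᵀ * Matrix.diagonal α * (Φ.updateCol m μ) := by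
  ext r c
  have hRHS : (Φᵀ * Matrix.diagonal α * (Φ.updateCol m μ)) r c
      = ∑ i, Φ i r * α i * (Φ.updateCol m μ) i c := by
    rw [Matrix.mul_apply]
    simp_rw [Matrix.mul_diagonal, Matrix.transpose_apply]
  rw [hRHS, Matrix.updateCol_apply]
  by_cases hc : c = m
  · subst hc
    simp only [if_pos rfl]
    rw [Matrix.mulVec]
    simp only [dotProduct, Matrix.transpose_apply, Matrix.mulVec_diagonal]
    refine Finset.sum_congr rfl fun i _ => ?_
    rw [Matrix.updateCol_apply, if_pos rfl]
    ring
  · simp only [if_neg hc]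
    rw [_root_.gram, Matrix.mul_apply]
    simp_rw [Matrix.mul_diagonal, Matrix.transpose_apply]
    refine Finset.sum_congr rfl fun i _ => ?_
    rw [Matrix.updateCol_apply, if_neg hc]

/-- Auxiliary: expansion of the Cramer vector of the Gram system into basic Cramer vectors. -/
lemma aux_cramer_expand (Φ : Matrix (Fin K) (Fin d) ℝ) (α : Fin K → ℝ) (μ : Fin K → ℝ)
    (m : Fin d) :
    Matrix.cramer (gram Φ α) (Φᵀ *ᵥ (Matrix.diagonal α *ᵥ μ)) m
      = ∑ J ∈ Finset.univ.filter (fun J : Fin d → Fin K => StrictMono J),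
          (∏ j, α (J j)) *
            ((subRows Φ J).det * Matrix.cramer (subRows Φ J) (μ ∘ J) m) := by
  rw [Matrix.cramer_apply, aux_gram_updateColumn, aux_det_expand]
  refine Finset.sum_congr rfl fun J hJ => ?_
  have hsub : (Φ.updateCol m μ).submatrix J id
      = (subRows Φ J).updateCol m (μ ∘ J) := by
    ext r c
    simp only [Matrix.submatrix_apply, Matrix.updateCol_apply, subRows, id,
      Function.comp_apply]
  rw [hsub, ← Matrix.cramer_apply]
  rfl

end Aux

/-- Characterization of the robust observation region.  For any reward
vector `μ` with optimal arm `k`, `μ ∈ C_k` iff every basic solution `Φ_J⁻¹ μ_J`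
(over index sets `J ∈ J(Φ)`, encoded as strictly monotone maps with invertible
row-submatrix) belongs to the robust parameter region `Θ_k`. -/
theorem robustObs_iff_basicSolutions {K d : ℕ} (hd : 0 < d) (hKd : d < K)
    (Φ : Matrix (Fin K) (Fin d) ℝ) (hrank : Φ.rank = d)
    (k : Fin K) (μ : Fin K → ℝ) (hμ : μ ∈ greedyRegion K k) :
    μ ∈ robustObs Φ k ↔
      ∀ J : Fin d → Fin K, StrictMono J → IsUnit (subRows Φ J).det →
        basicSol Φ J μ ∈ robustParam Φ k := by
  have hdot : ∀ (s : Fin d → ℝ) (a b : Fin K),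
      (Φ *ᵥ s) a - (Φ *ᵥ s) b = ∑ m, (Φ a m - Φ b m) * s m := by
    intro s a b
    rw [Matrix.mulVec, Matrix.mulVec, dotProduct, dotProduct, ← Finset.sum_sub_distrib]
    exact Finset.sum_congr rfl fun m _ => by ring
  constructor
  · -- forward direction: specialize to the uniform distribution on the rows of `J`
    intro hC J hJ hdet
    have hdpos : (0:ℝ) < d := by exact_mod_cast hd
    have hdne : (d:ℝ) ≠ 0 := ne_of_gt hdpos
    set ΦJ := subRows Φ J with hΦJ
    set α : Fin K → ℝ := fun i => if i ∈ Set.range J then (d : ℝ)⁻¹ else 0 with hα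
    have hfilter : Finset.univ.filter (fun i : Fin K => i ∈ Set.range J)
        = Finset.image J Finset.univ := by
      ext i; simp [Set.mem_range, eq_comm]
    have hsum_range : ∀ f : Fin K → ℝ,
        (∑ i, if i ∈ Set.range J then f i else 0) = ∑ j, f (J j) := by
      intro f
      rw [← Finset.sum_filter, hfilter,
        Finset.sum_image (fun x _ y _ h => hJ.injective h)]
    have hαval : ∀ i, i ∈ Set.range J → α i = (d:ℝ)⁻¹ := fun i h => by
      simp only [hα]; exact if_pos h
    have hαval' : ∀ i, i ∉ Set.range J → α i = 0 := fun i h => by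
      simp only [hα]; exact if_neg h
    have hsimplex : IsSimplex α := by
      constructor
      · intro i
        by_cases h : i ∈ Set.range J
        · rw [hαval i h]; positivity
        · rw [hαval' i h]
      · have : (∑ i, α i) = ∑ i, (if i ∈ Set.range J then (d:ℝ)⁻¹ else 0) := rfl
        rw [this, hsum_range (fun _ => (d:ℝ)⁻¹)]
        simp only [Finset.sum_const, Finset.card_univ, Fintype.card_fin, nsmul_eq_mul]
        field_simp
    have hgram : gram Φ α = (d:ℝ)⁻¹ • (ΦJᵀ * ΦJ) := by
      ext r c
      have hL : (gram Φ α) r c = ∑ i, Φ i r * α i * Φ i c := by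
        rw [_root_.gram, Matrix.mul_apply]
        simp_rw [Matrix.mul_diagonal, Matrix.transpose_apply]
      rw [hL]
      have h2 : ∀ i, Φ i r * α i * Φ i c
          = (if i ∈ Set.range J then (d:ℝ)⁻¹ * (Φ i r * Φ i c) else 0) := by
        intro i
        by_cases h : i ∈ Set.range J
        · rw [hαval i h, if_pos h]; ring
        · rw [hαval' i h, if_neg h]; ring
      simp_rw [h2]
      rw [hsum_range]
      simp only [Matrix.smul_apply, Matrix.mul_apply, smul_eq_mul, Finset.mul_sum]
      refine Finset.sum_congr rfl fun j _ => ?_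
      simp only [Matrix.transpose_apply, hΦJ, subRows, Matrix.submatrix_apply, id]
    have hdetgram : IsUnit (gram Φ α).det := by
      rw [hgram, Matrix.det_smul, Matrix.det_mul, Matrix.det_transpose]
      rw [isUnit_iff_ne_zero] at hdet ⊢
      simp only [Fintype.card_fin]
      positivity
    have hb : Φᵀ *ᵥ (Matrix.diagonal α *ᵥ μ) = gram Φ α *ᵥ basicSol Φ J μ := by
      have hR : (ΦJᵀ * ΦJ) *ᵥ (ΦJ⁻¹ *ᵥ (μ ∘ J)) = ΦJᵀ *ᵥ (μ ∘ J) := by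
        rw [Matrix.mulVec_mulVec, Matrix.mul_assoc, Matrix.mul_nonsing_inv _ hdet,
          Matrix.mul_one]
      rw [hgram, basicSol, Matrix.smul_mulVec, ← hΦJ, hR]
      ext r
      have hLr : (Φᵀ *ᵥ (Matrix.diagonal α *ᵥ μ)) r
          = ∑ i, if i ∈ Set.range J then (d:ℝ)⁻¹ * (Φ i r * μ i) else 0 := by
        rw [Matrix.mulVec]
        simp only [dotProduct, Matrix.transpose_apply, Matrix.mulVec_diagonal]
        refine Finset.sum_congr rfl fun i _ => ?_
        by_cases h : i ∈ Set.range J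
        · rw [hαval i h, if_pos h]; ring
        · rw [hαval' i h, if_neg h]; ring
      rw [hLr, hsum_range]
      simp only [Pi.smul_apply, smul_eq_mul, Matrix.mulVec, dotProduct,
        Matrix.transpose_apply, hΦJ, subRows, Matrix.submatrix_apply, id,
        Function.comp_apply, Finset.mul_sum]
    have hm : modelEst Φ α μ = basicSol Φ J μ := by
      rw [modelEst, hb, Matrix.mulVec_mulVec, Matrix.nonsing_inv_mul _ hdetgram,
        Matrix.one_mulVec]
    have := hC.2 α hsimplex hdetgram
    rwa [hm] at this
  · -- reverse direction
    intro hB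
    refine ⟨hμ, ?_⟩
    intro α hsimp hdet
    intro i hik
    set S := Finset.univ.filter (fun J : Fin d → Fin K => StrictMono J) with hS
    set G := gram Φ α with hG
    set b := Φᵀ *ᵥ (Matrix.diagonal α *ᵥ μ) with hbdef
    set θ := modelEst Φ α μ with hθdef
    set v : Fin d → ℝ := fun m => Φ k m - Φ i m with hv
    -- determinant expansion
    have hdetG : G.det = ∑ J ∈ S, (∏ j, α (J j)) * ((subRows Φ J).det * (subRows Φ J).det) :=
      aux_det_expand Φ Φ α
    have hterm_nonneg : ∀ J ∈ S,
        0 ≤ (∏ j, α (J j)) * ((subRows Φ J).det * (subRows Φ J).det) := by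
      intro J _
      exact mul_nonneg (Finset.prod_nonneg fun j _ => hsimp.1 (J j)) (mul_self_nonneg _)
    have hGpos : 0 < G.det := by
      rcases (Finset.sum_nonneg hterm_nonneg).lt_or_eq with h | h
      · rwa [← hdetG] at h
      · exfalso
        exact isUnit_iff_ne_zero.mp hdet (by rw [hdetG, ← h])
    have hexists : ∃ J₀ ∈ S,
        0 < (∏ j, α (J₀ j)) * ((subRows Φ J₀).det * (subRows Φ J₀).det) := by
      by_contra hcon
      push_neg at hcon
      have : G.det = 0 := by
        rw [hdetG]
        exact Finset.sum_eq_zero fun J hJ => le_antisymm (hcon J hJ) (hterm_nonneg J hJ)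
      exact absurd this (ne_of_gt hGpos)
    -- positivity of v ⬝ basic solutions
    have hbasic : ∀ J ∈ S, IsUnit (subRows Φ J).det →
        0 < ∑ m, v m * basicSol Φ J μ m := by
      intro J hJ hu
      have hJm : StrictMono J := by simpa [hS] using hJ
      have := hB J hJm hu i hik
      have h2 := hdot (basicSol Φ J μ) k i
      have hvθ : ∑ m, v m * basicSol Φ J μ m
          = (Φ *ᵥ basicSol Φ J μ) k - (Φ *ᵥ basicSol Φ J μ) i := (h2).symm ▸ rfl
      rw [← h2]
      linarith [this]
    -- main identity
    have hcramer_vec : G.det • θ = Matrix.cramer G b :=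
      Matrix.det_smul_inv_mulVec_eq_cramer G b hdet
    have hmain : G.det * (∑ m, v m * θ m)
        = ∑ J ∈ S, (∏ j, α (J j)) *
            ((subRows Φ J).det * ∑ m, v m * Matrix.cramer (subRows Φ J) (μ ∘ J) m) := by
      have h1 : G.det * (∑ m, v m * θ m) = ∑ m, v m * (G.det * θ m) := by
        rw [Finset.mul_sum]; exact Finset.sum_congr rfl fun m _ => by ring
      rw [h1]
      have h2 : ∀ m, G.det * θ m = Matrix.cramer G b m := by
        intro m
        have := congrFun hcramer_vec m
        simpa [smul_eq_mul] using this
      simp_rw [h2, hG, hbdef, aux_cramer_expand Φ α μ, ← hS, Finset.mul_sum]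
      rw [Finset.sum_comm]
      refine Finset.sum_congr rfl fun J _ => ?_
      try simp_rw [Finset.mul_sum]
      exact Finset.sum_congr rfl fun m _ => by ring
    -- each term is nonnegative, one is positive
    have hT_nonneg : ∀ J ∈ S, 0 ≤ (∏ j, α (J j)) *
        ((subRows Φ J).det * ∑ m, v m * Matrix.cramer (subRows Φ J) (μ ∘ J) m) := by
      intro J hJ
      by_cases hu : IsUnit (subRows Φ J).det
      · have hcr : ∀ m, Matrix.cramer (subRows Φ J) (μ ∘ J) m
            = (subRows Φ J).det * basicSol Φ J μ m := by
          intro m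
          have := congrFun (Matrix.det_smul_inv_mulVec_eq_cramer (subRows Φ J) (μ ∘ J) hu) m
          simpa [smul_eq_mul, basicSol] using this.symm
        simp_rw [hcr]
        have : ∑ m, v m * ((subRows Φ J).det * basicSol Φ J μ m)
            = (subRows Φ J).det * ∑ m, v m * basicSol Φ J μ m := by
          rw [Finset.mul_sum]; exact Finset.sum_congr rfl fun m _ => by ring
        rw [this]
        have hpos := hbasic J hJ hu
        have hprod : (0:ℝ) ≤ ∏ j, α (J j) := Finset.prod_nonneg fun j _ => hsimp.1 (J j)
        refine mul_nonneg hprod ?_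
        have hassoc : (subRows Φ J).det * ((subRows Φ J).det * ∑ m, v m * basicSol Φ J μ m)
            = ((subRows Φ J).det * (subRows Φ J).det) * ∑ m, v m * basicSol Φ J μ m := by
          ring
        rw [hassoc]
        exact mul_nonneg (mul_self_nonneg _) hpos.le
      · rw [isUnit_iff_ne_zero, not_not] at hu
        rw [hu]
        simp
    have hT_pos : ∃ J ∈ S, 0 < (∏ j, α (J j)) *
        ((subRows Φ J).det * ∑ m, v m * Matrix.cramer (subRows Φ J) (μ ∘ J) m) := by
      obtain ⟨J₀, hJ₀, hpos⟩ := hexists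
      refine ⟨J₀, hJ₀, ?_⟩
      have hune : (subRows Φ J₀).det ≠ 0 := by
        intro h0; rw [h0] at hpos; simp at hpos
      have hu : IsUnit (subRows Φ J₀).det := isUnit_iff_ne_zero.mpr hune
      have hprodpos : 0 < ∏ j, α (J₀ j) := by
        rcases (Finset.prod_nonneg fun j _ => hsimp.1 (J₀ j)).lt_or_eq with h | h
        · exact h
        · exfalso; rw [← h] at hpos; simp at hpos
      have hcr : ∀ m, Matrix.cramer (subRows Φ J₀) (μ ∘ J₀) m
          = (subRows Φ J₀).det * basicSol Φ J₀ μ m := by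
        intro m
        have := congrFun (Matrix.det_smul_inv_mulVec_eq_cramer (subRows Φ J₀) (μ ∘ J₀) hu) m
        simpa [smul_eq_mul, basicSol] using this.symm
      simp_rw [hcr]
      have : ∑ m, v m * ((subRows Φ J₀).det * basicSol Φ J₀ μ m)
          = (subRows Φ J₀).det * ∑ m, v m * basicSol Φ J₀ μ m := by
        rw [Finset.mul_sum]; exact Finset.sum_congr rfl fun m _ => by ring
      rw [this]
      have hbpos := hbasic J₀ hJ₀ hu
      refine mul_pos hprodpos ?_
      have hassoc : (subRows Φ J₀).det * ((subRows Φ J₀).det * ∑ m, v m * basicSol Φ J₀ μ m)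
          = ((subRows Φ J₀).det * (subRows Φ J₀).det) * ∑ m, v m * basicSol Φ J₀ μ m := by
        ring
      rw [hassoc]
      exact mul_pos (mul_self_pos.mpr hune) hbpos
    have hsum_pos : 0 < ∑ J ∈ S, (∏ j, α (J j)) *
        ((subRows Φ J).det * ∑ m, v m * Matrix.cramer (subRows Φ J) (μ ∘ J) m) :=
      Finset.sum_pos' hT_nonneg hT_pos
    have hvθpos : 0 < ∑ m, v m * θ m := by
      nlinarith [hmain, hGpos, hsum_pos]
    have := hdot θ k i
    have : (Φ *ᵥ θ) k - (Φ *ᵥ θ) i > 0 := by rw [this]; exact hvθpos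
    linarith [this]

end
end

section
/- Rational sampling distributions suffice to determine the robust observation region: for any μ ∈ R_k, μ belongs to C_k if and only if P^Λ(μ) ∈ Θ_k for every admissible Λ = diag(α) whose weights α(1),…,α(K) are all rational numbers. -/
open Matrix BigOperators
open scoped Classical

noncomputable section

namespace RobustAux

/-- Multilinear expansion of `det (Aᵀ D(w) B)` over functions `c : n → m`. -/
lemma det_expand {m n : Type*} [Fintype m] [DecidableEq m] [Fintype n] [DecidableEq n]
    (A B : Matrix m n ℝ) (w : m → ℝ) :
    (Aᵀ * Matrix.diagonal w * B).det
      = ∑ c : n → m, (∏ a, w (c a) * A (c a) a) * (B.submatrix c id).det := by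
  have h : Aᵀ * Matrix.diagonal w * B = Matrix.of (fun a => ∑ j, (w j * A j a) • B j) := by
    rw [Matrix.mul_assoc]
    ext a b
    simp only [Matrix.mul_apply, Matrix.diagonal_apply, Matrix.transpose_apply, Matrix.of_apply,
      Finset.sum_apply, Pi.smul_apply, smul_eq_mul, ite_mul, zero_mul, Finset.sum_ite_eq,
      Finset.mem_univ, if_true]
    exact Finset.sum_congr rfl fun j _ => by ring
  rw [h]
  have h2 := (Matrix.detRowAlternating (R := ℝ) (n := n)).toMultilinearMap.map_sum
      (g := fun a (j : m) => (w j * A j a) • B j)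
  refine Eq.trans h2 ?_
  refine Finset.sum_congr rfl fun c _ => ?_
  have h3 := (Matrix.detRowAlternating (R := ℝ) (n := n)).toMultilinearMap.map_smul_univ
      (fun a => w (c a) * A (c a) a) (fun a => B (c a))
  refine Eq.trans h3 ?_
  rw [smul_eq_mul]
  rfl

variable {K d : ℕ}

def Scoef (Φ : Matrix (Fin K) (Fin d) ℝ) (μ : Fin K → ℝ) (v : Fin d → ℝ)
    (c : Fin d → Fin K) : ℝ :=
  (∏ a, Φ (c a) a) * ∑ j, v j * ((Φ.submatrix c id).updateCol j (μ ∘ c)).det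

def Rcoef (Φ : Matrix (Fin K) (Fin d) ℝ) (c : Fin d → Fin K) : ℝ :=
  (∏ a, Φ (c a) a) * (Φ.submatrix c id).det

lemma updateCol_submatrix {m m' n : Type*} [DecidableEq n] (X : Matrix m n ℝ) (j : n)
    (u : m → ℝ) (c : m' → m) :
    (X.updateCol j u).submatrix c id = (X.submatrix c id).updateCol j (u ∘ c) := by
  ext a b
  by_cases hb : b = j <;>
    simp [Matrix.updateCol_apply, Matrix.submatrix_apply, hb]

lemma p_expand (Φ : Matrix (Fin K) (Fin d) ℝ) (μ : Fin K → ℝ) (v : Fin d → ℝ)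
    (w : Fin K → ℝ) :
    ∑ j, v j * ((gram Φ w).updateCol j (Φᵀ *ᵥ (Matrix.diagonal w *ᵥ μ))).det
      = ∑ c : Fin d → Fin K, (∏ a, w (c a)) * Scoef Φ μ v c := by
  have h1 : ∀ j, (gram Φ w).updateCol j (Φᵀ *ᵥ (Matrix.diagonal w *ᵥ μ))
      = Φᵀ * Matrix.diagonal w * (Φ.updateCol j μ) := by
    intro j
    rw [_root_.gram, Matrix.mul_assoc, Matrix.mul_assoc]
    ext a b
    by_cases hb : b = j
    · subst hb
      rw [Matrix.updateCol_apply, if_pos rfl]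
      simp only [Matrix.mul_apply, Matrix.diagonal_apply, Matrix.transpose_apply,
        Matrix.mulVec, dotProduct, Matrix.updateCol_apply, if_pos rfl,
        ite_mul, zero_mul, mul_ite, mul_zero, Finset.sum_ite_eq, Finset.mem_univ, if_true]
    · rw [Matrix.updateCol_apply, if_neg hb]
      simp only [Matrix.mul_apply, Matrix.diagonal_apply, Matrix.transpose_apply,
        Matrix.updateCol_apply, if_neg hb, ite_mul, zero_mul, mul_ite, mul_zero,
        Finset.sum_ite_eq, Finset.mem_univ, if_true]
  simp_rw [h1, det_expand Φ _ w, Finset.mul_sum]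
  rw [Finset.sum_comm]
  refine Finset.sum_congr rfl fun c _ => ?_
  simp_rw [updateCol_submatrix, Scoef, Finset.prod_mul_distrib, Finset.mul_sum]
  exact Finset.sum_congr rfl fun j _ => by ring

lemma gram_expand (Φ : Matrix (Fin K) (Fin d) ℝ) (w : Fin K → ℝ) :
    (gram Φ w).det = ∑ c : Fin d → Fin K, (∏ a, w (c a)) * Rcoef Φ c := by
  rw [show gram Φ w = Φᵀ * Matrix.diagonal w * Φ from rfl, det_expand Φ Φ w]
  simp_rw [Rcoef, Finset.prod_mul_distrib]
  exact Finset.sum_congr rfl fun c _ => by ring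

lemma square_expand (A B : Matrix (Fin d) (Fin d) ℝ) :
    ∑ e : Fin d → Fin d, (∏ a, A (e a) a) * (B.submatrix e id).det = A.det * B.det := by
  calc ∑ e : Fin d → Fin d, (∏ a, A (e a) a) * (B.submatrix e id).det
      = ∑ e : Fin d → Fin d,
          (∏ a, (fun _ : Fin d => (1:ℝ)) (e a) * A (e a) a) * (B.submatrix e id).det := by
        simp only [one_mul]
    _ = (Aᵀ * Matrix.diagonal (fun _ : Fin d => (1:ℝ)) * B).det :=
        (det_expand A B (fun _ : Fin d => (1:ℝ))).symm
    _ = A.det * B.det := by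
        rw [Matrix.diagonal_one, Matrix.mul_one, Matrix.det_mul, Matrix.det_transpose]

lemma Esum_eq (Φ : Matrix (Fin K) (Fin d) ℝ) (μ : Fin K → ℝ) (v : Fin d → ℝ)
    (c : Fin d → Fin K) :
    ∑ e : Fin d → Fin d, Scoef Φ μ v (c ∘ e)
      = (Φ.submatrix c id).det
          * ∑ j, v j * ((Φ.submatrix c id).updateCol j (μ ∘ c)).det := by
  set A := Φ.submatrix c id with hA
  have hs : ∀ e : Fin d → Fin d, Scoef Φ μ v (c ∘ e)
      = (∏ a, A (e a) a)
          * ∑ j, v j * ((A.updateCol j (μ ∘ c)).submatrix e id).det := by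
    intro e
    unfold Scoef
    have h1 : ∀ j, ((Φ.submatrix (c ∘ e) id).updateCol j (μ ∘ (c ∘ e)))
        = (A.updateCol j (μ ∘ c)).submatrix e id := by
      intro j
      ext a b
      by_cases hb : b = j <;>
        simp [Matrix.updateCol_apply, Matrix.submatrix_apply, hb, hA]
    simp_rw [h1]
    congr 1
  calc ∑ e : Fin d → Fin d, Scoef Φ μ v (c ∘ e)
      = ∑ e : Fin d → Fin d, ∑ j, v j
          * ((∏ a, A (e a) a) * ((A.updateCol j (μ ∘ c)).submatrix e id).det) := by
        refine Finset.sum_congr rfl fun e _ => ?_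
        rw [hs e, Finset.mul_sum]
        exact Finset.sum_congr rfl fun j _ => by ring
    _ = ∑ j, v j * ∑ e : Fin d → Fin d,
          (∏ a, A (e a) a) * ((A.updateCol j (μ ∘ c)).submatrix e id).det := by
        rw [Finset.sum_comm]
        refine Finset.sum_congr rfl fun j _ => ?_
        rw [Finset.mul_sum]
    _ = ∑ j, v j * (A.det * (A.updateCol j (μ ∘ c)).det) := by
        refine Finset.sum_congr rfl fun j _ => ?_
        rw [square_expand]
    _ = A.det * ∑ j, v j * (A.updateCol j (μ ∘ c)).det := by
        rw [Finset.mul_sum]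
        exact Finset.sum_congr rfl fun j _ => by ring

lemma Rsum_eq (Φ : Matrix (Fin K) (Fin d) ℝ) (c : Fin d → Fin K) :
    ∑ e : Fin d → Fin d, Rcoef Φ (c ∘ e)
      = (Φ.submatrix c id).det * (Φ.submatrix c id).det := by
  set A := Φ.submatrix c id with hA
  have hs : ∀ e : Fin d → Fin d, Rcoef Φ (c ∘ e)
      = (∏ a, A (e a) a) * ((A.submatrix e id)).det := fun e => rfl
  simp_rw [hs]
  exact square_expand A A

lemma Scoef_eq_zero (Φ : Matrix (Fin K) (Fin d) ℝ) (μ : Fin K → ℝ) (v : Fin d → ℝ)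
    {c : Fin d → Fin K} (hc : ¬ Function.Injective c) : Scoef Φ μ v c = 0 := by
  obtain ⟨a, a', hceq, hne⟩ := Function.not_injective_iff.1 hc
  have hz : ∀ j, ((Φ.submatrix c id).updateCol j (μ ∘ c)).det = 0 := by
    intro j
    refine Matrix.det_zero_of_row_eq hne (funext fun b => ?_)
    by_cases hb : b = j <;>
      simp [Matrix.updateCol_apply, Matrix.submatrix_apply, hb, hceq]
  unfold Scoef
  simp [hz]

lemma Rcoef_eq_zero (Φ : Matrix (Fin K) (Fin d) ℝ)
    {c : Fin d → Fin K} (hc : ¬ Function.Injective c) : Rcoef Φ c = 0 := by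
  obtain ⟨a, a', hceq, hne⟩ := Function.not_injective_iff.1 hc
  have hz : (Φ.submatrix c id).det = 0 :=
    Matrix.det_zero_of_row_eq hne (funext fun b => by simp [Matrix.submatrix_apply, hceq])
  unfold Rcoef
  rw [hz, mul_zero]

lemma perm_avg (T : (Fin d → Fin K) → ℝ)
    (hT : ∀ c, ¬ Function.Injective c → T c = 0) (w : Fin K → ℝ) :
    ∃ N : ℕ, 0 < N ∧
      ∑ c : Fin d → Fin K, (∏ a, w (c a)) * (∑ e : Fin d → Fin d, T (c ∘ e))
        = N * ∑ c : Fin d → Fin K, (∏ a, w (c a)) * T c := by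
  classical
  have hswap : ∑ c : Fin d → Fin K, (∏ a, w (c a)) * (∑ e : Fin d → Fin d, T (c ∘ e))
      = ∑ e : Fin d → Fin d, ∑ c : Fin d → Fin K, (∏ a, w (c a)) * T (c ∘ e) := by
    simp_rw [Finset.mul_sum]
    exact Finset.sum_comm
  have hinner : ∀ e : Fin d → Fin d,
      ∑ c : Fin d → Fin K, (∏ a, w (c a)) * T (c ∘ e)
        = if Function.Bijective e then ∑ c : Fin d → Fin K, (∏ a, w (c a)) * T c
          else 0 := by
    intro e
    by_cases he : Function.Bijective e
    · rw [if_pos he]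
      set σ : Fin d ≃ Fin d := Equiv.ofBijective e he with hσ
      set E : (Fin d → Fin K) ≃ (Fin d → Fin K) :=
        { toFun := fun c => c ∘ ⇑σ.symm
          invFun := fun c => c ∘ ⇑σ
          left_inv := fun c => by funext a; simp
          right_inv := fun c => by funext a; simp } with hE
      have := Equiv.sum_comp E (fun c : Fin d → Fin K => (∏ a, w (c a)) * T (c ∘ e))
      rw [← this]
      refine Finset.sum_congr rfl fun c _ => ?_
      have h1 : (E c) ∘ e = c := by
        funext a
        show c (σ.symm (e a)) = c a
        have : e a = σ a := rfl
        rw [this, Equiv.symm_apply_apply]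
      have h2 : (∏ a, w (E c a)) = ∏ a, w (c a) := by
        have := Equiv.prod_comp σ.symm (fun a => w (c a))
        exact this
      rw [h1, h2]
    · rw [if_neg he]
      refine Finset.sum_eq_zero fun c _ => ?_
      have hni : ¬ Function.Injective (c ∘ e) := by
        intro hinj
        exact he (Finite.injective_iff_bijective.1 fun a b hab =>
          hinj (show (c ∘ e) a = (c ∘ e) b from congrArg c hab))
      rw [hT _ hni, mul_zero]
  refine ⟨(Finset.univ.filter fun e : Fin d → Fin d => Function.Bijective e).card, ?_, ?_⟩
  · exact Finset.card_pos.2 ⟨id, Finset.mem_filter.2 ⟨Finset.mem_univ _, Function.bijective_id⟩⟩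
  · rw [hswap]
    calc ∑ e : Fin d → Fin d, ∑ c : Fin d → Fin K, (∏ a, w (c a)) * T (c ∘ e)
        = ∑ e : Fin d → Fin d, (if Function.Bijective e then
            ∑ c : Fin d → Fin K, (∏ a, w (c a)) * T c else 0) :=
          Finset.sum_congr rfl fun e _ => hinner e
      _ = _ := by
          rw [Finset.sum_ite, Finset.sum_const, Finset.sum_const_zero, add_zero, nsmul_eq_mul]

/-- The key sign lemma: at an invertible `d`-row subset, the elemental estimate is the
model estimate at a rational simplex point, hence satisfies the strict inequality. -/
lemma sign_pos (hd : 0 < d) (Φ : Matrix (Fin K) (Fin d) ℝ) (μ : Fin K → ℝ)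
    (k i : Fin K) (hik : i ≠ k)
    (hyp : ∀ α : Fin K → ℝ, IsSimplex α → (∀ l, ∃ q : ℚ, α l = (q : ℝ)) →
      IsUnit (gram Φ α).det → modelEst Φ α μ ∈ robustParam Φ k)
    (c : Fin d → Fin K) (hdet : (Φ.submatrix c id).det ≠ 0) :
    0 < (Φ.submatrix c id).det
        * ∑ j, (Φ k j - Φ i j) * ((Φ.submatrix c id).updateCol j (μ ∘ c)).det := by
  set A := Φ.submatrix c id with hA
  have hc : Function.Injective c := by
    intro a a' h
    by_contra hne
    exact hdet (Matrix.det_zero_of_row_eq hne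
      (funext fun b => by simp [hA, Matrix.submatrix_apply, h]))
  have hAu : IsUnit A.det := isUnit_iff_ne_zero.2 hdet
  have hdne : (d : ℝ) ≠ 0 := Nat.cast_ne_zero.2 hd.ne'
  set α : Fin K → ℝ := fun j => if j ∈ Finset.image c Finset.univ then ((d : ℝ))⁻¹ else 0
    with hαdef
  have hsimp : IsSimplex α := by
    constructor
    · intro j
      rw [hαdef]
      dsimp only
      split
      · positivity
      · exact le_rfl
    · calc ∑ j, α j = ∑ j ∈ Finset.image c Finset.univ, (d : ℝ)⁻¹ := by
            rw [hαdef]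
            exact Fintype.sum_ite_mem _ _
        _ = (Finset.image c Finset.univ).card • (d : ℝ)⁻¹ := Finset.sum_const _
        _ = 1 := by
            rw [Finset.card_image_of_injective _ hc, Finset.card_univ, Fintype.card_fin,
              nsmul_eq_mul, mul_inv_cancel₀ hdne]
  have hrat : ∀ l, ∃ q : ℚ, α l = (q : ℝ) := by
    intro l
    rw [hαdef]
    dsimp only
    split
    · exact ⟨(d : ℚ)⁻¹, by push_cast; rfl⟩
    · exact ⟨0, by simp⟩
  have hgram : gram Φ α = (d : ℝ)⁻¹ • (Aᵀ * A) := by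
    rw [_root_.gram, Matrix.mul_assoc]
    ext a b
    simp only [Matrix.mul_apply, Matrix.diagonal_apply, Matrix.transpose_apply,
      Matrix.smul_apply, smul_eq_mul, Matrix.submatrix_apply, id_eq, ite_mul, zero_mul,
      Finset.sum_ite_eq, Finset.mem_univ, if_true]
    calc ∑ j, Φ j a * (α j * Φ j b)
        = ∑ j, (if j ∈ Finset.image c Finset.univ then Φ j a * ((d : ℝ)⁻¹ * Φ j b) else 0) := by
          refine Finset.sum_congr rfl fun j _ => ?_
          rw [hαdef]
          dsimp only
          split <;> simp
      _ = ∑ j ∈ Finset.image c Finset.univ, Φ j a * ((d : ℝ)⁻¹ * Φ j b) :=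
          Fintype.sum_ite_mem _ _
      _ = ∑ a' : Fin d, Φ (c a') a * ((d : ℝ)⁻¹ * Φ (c a') b) := by
          rw [Finset.sum_image (fun x _ y _ h => hc h)]
      _ = (d : ℝ)⁻¹ * ∑ a' : Fin d, Φ (c a') a * Φ (c a') b := by
          rw [Finset.mul_sum]
          exact Finset.sum_congr rfl fun a' _ => by ring
  have hvec : (Φᵀ *ᵥ (Matrix.diagonal α *ᵥ μ)) = (d : ℝ)⁻¹ • (Aᵀ *ᵥ (μ ∘ c)) := by
    funext a
    simp only [Matrix.mulVec, dotProduct, Matrix.transpose_apply,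
      Matrix.diagonal_apply, Pi.smul_apply, smul_eq_mul, Matrix.submatrix_apply,
      Function.comp_apply, id_eq, ite_mul, zero_mul, Finset.sum_ite_eq,
      Finset.mem_univ, if_true]
    calc ∑ j, Φ j a * (α j * μ j)
        = ∑ j, (if j ∈ Finset.image c Finset.univ then Φ j a * ((d : ℝ)⁻¹ * μ j) else 0) := by
          refine Finset.sum_congr rfl fun j _ => ?_
          rw [hαdef]
          dsimp only
          split <;> simp <;> ring
      _ = ∑ j ∈ Finset.image c Finset.univ, Φ j a * ((d : ℝ)⁻¹ * μ j) :=
          Fintype.sum_ite_mem _ _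
      _ = ∑ a' : Fin d, Φ (c a') a * ((d : ℝ)⁻¹ * μ (c a')) := by
          rw [Finset.sum_image (fun x _ y _ h => hc h)]
      _ = (d : ℝ)⁻¹ * ∑ a' : Fin d, Φ (c a') a * μ (c a') := by
          rw [Finset.mul_sum]
          exact Finset.sum_congr rfl fun a' _ => by ring
  have hMdet : IsUnit (Aᵀ * A).det := by
    rw [Matrix.det_mul, Matrix.det_transpose]
    exact hAu.mul hAu
  have hgdet : IsUnit (gram Φ α).det := by
    rw [hgram, Matrix.det_smul]
    exact ((isUnit_iff_ne_zero.2 (inv_ne_zero hdne)).pow _).mul hMdet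
  have hrob := hyp α hsimp hrat hgdet
  simp only [robustParam, greedyRegion, Set.mem_setOf_eq] at hrob
  have hMinv : ((d : ℝ)⁻¹ • (Aᵀ * A))⁻¹ = (d : ℝ) • (Aᵀ * A)⁻¹ := by
    apply Matrix.inv_eq_right_inv
    rw [Matrix.smul_mul, Matrix.mul_smul, smul_smul, Matrix.mul_nonsing_inv _ hMdet,
      inv_mul_cancel₀ hdne, one_smul]
  have hθ : modelEst Φ α μ = A⁻¹ *ᵥ (μ ∘ c) := by
    unfold modelEst
    rw [hgram, hvec, hMinv, Matrix.smul_mulVec, Matrix.mulVec_smul, smul_smul,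
      mul_inv_cancel₀ hdne, one_smul, Matrix.mul_inv_rev, Matrix.mulVec_mulVec,
      Matrix.mul_assoc, Matrix.nonsing_inv_mul _ (by rw [Matrix.det_transpose]; exact hAu),
      Matrix.mul_one]
  have h2 : (Φ *ᵥ (A⁻¹ *ᵥ (μ ∘ c))) i < (Φ *ᵥ (A⁻¹ *ᵥ (μ ∘ c))) k := by
    have := hrob i hik
    rwa [hθ] at this
  have hpos : 0 < ∑ a, (Φ k a - Φ i a) * (A⁻¹ *ᵥ (μ ∘ c)) a := by
    have h3 := sub_pos.2 h2
    have h4 : (Φ *ᵥ (A⁻¹ *ᵥ (μ ∘ c))) k - (Φ *ᵥ (A⁻¹ *ᵥ (μ ∘ c))) i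
        = ∑ a, (Φ k a - Φ i a) * (A⁻¹ *ᵥ (μ ∘ c)) a := by
      simp only [Matrix.mulVec, dotProduct]
      rw [← Finset.sum_sub_distrib]
      exact Finset.sum_congr rfl fun a _ => by ring
    rwa [h4] at h3
  have hcr : ∀ j, (A.updateCol j (μ ∘ c)).det = (A.adjugate *ᵥ (μ ∘ c)) j := by
    intro j
    rw [← Matrix.cramer_eq_adjugate_mulVec, Matrix.cramer_apply]
  have hadj : A.adjugate *ᵥ (μ ∘ c) = A.det • (A⁻¹ *ᵥ (μ ∘ c)) := by
    rw [Matrix.inv_def, Matrix.smul_mulVec, smul_smul,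
      Ring.mul_inverse_cancel _ hAu, one_smul]
  have hfin : A.det * ∑ j, (Φ k j - Φ i j) * (A.updateCol j (μ ∘ c)).det
      = (A.det * A.det) * ∑ a, (Φ k a - Φ i a) * (A⁻¹ *ᵥ (μ ∘ c)) a := by
    simp_rw [hcr, hadj, Pi.smul_apply, smul_eq_mul]
    rw [Finset.mul_sum, Finset.mul_sum]
    exact Finset.sum_congr rfl fun j _ => by ring
  rw [hfin]
  exact mul_pos (mul_self_pos.2 hdet) hpos

end RobustAux

/-- Rational sampling distributions suffice to determine the robust
observation region: for `μ ∈ R_k`, `μ ∈ C_k` iff `P^Λ(μ) ∈ Θ_k` for every admissible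
`Λ = diag α` all of whose weights are rational. -/
theorem robustObs_iff_rational_samplings {K d : ℕ} (hd : 0 < d) (hKd : d < K)
    (Φ : Matrix (Fin K) (Fin d) ℝ) (hrank : Φ.rank = d)
    (k : Fin K) (μ : Fin K → ℝ) (hμ : μ ∈ greedyRegion K k) :
    μ ∈ robustObs Φ k ↔
      ∀ α : Fin K → ℝ, IsSimplex α → (∀ i, ∃ q : ℚ, α i = (q : ℝ)) →
        IsUnit (gram Φ α).det → modelEst Φ α μ ∈ robustParam Φ k := by
  constructor
  · rintro ⟨-, h2⟩ α hα _ hunit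
    exact h2 α hα hunit
  · intro hyp
    refine ⟨hμ, ?_⟩
    intro α hα hunit
    simp only [robustParam, greedyRegion, Set.mem_setOf_eq]
    intro i hik
    set v : Fin d → ℝ := fun a => Φ k a - Φ i a with hv
    have hdetG : (gram Φ α).det ≠ 0 := hunit.ne_zero
    obtain ⟨N₁, hN₁, e₁⟩ := RobustAux.perm_avg (RobustAux.Scoef Φ μ v)
      (fun c hc => RobustAux.Scoef_eq_zero Φ μ v hc) α
    obtain ⟨N₂, hN₂, e₂⟩ := RobustAux.perm_avg (RobustAux.Rcoef Φ)
      (fun c hc => RobustAux.Rcoef_eq_zero Φ hc) α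
    have hπ : ∀ c : Fin d → Fin K, 0 ≤ ∏ a, α (c a) :=
      fun c => Finset.prod_nonneg fun a _ => hα.1 _
    have hGexp : (gram Φ α).det
        = ∑ c : Fin d → Fin K, (∏ a, α (c a)) * RobustAux.Rcoef Φ c :=
      RobustAux.gram_expand Φ α
    have hNpos2 : (0:ℝ) < N₂ := by exact_mod_cast hN₂
    have hdet_nonneg : 0 ≤ (gram Φ α).det := by
      have h0 : 0 ≤ ∑ c : Fin d → Fin K,
          (∏ a, α (c a)) * (∑ e : Fin d → Fin d, RobustAux.Rcoef Φ (c ∘ e)) := by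
        refine Finset.sum_nonneg fun c _ => ?_
        rw [RobustAux.Rsum_eq]
        exact mul_nonneg (hπ c) (mul_self_nonneg _)
      rw [e₂, ← hGexp] at h0
      nlinarith
    have hdet_pos : 0 < (gram Φ α).det := hdet_nonneg.lt_of_ne (Ne.symm hdetG)
    have hsumne : (∑ c : Fin d → Fin K, (∏ a, α (c a)) * RobustAux.Rcoef Φ c) ≠ 0 := by
      rw [← hGexp]; exact hdetG
    obtain ⟨c₀, -, hc₀⟩ := Finset.exists_ne_zero_of_sum_ne_zero hsumne
    have hπc₀ : 0 < ∏ a, α (c₀ a) := (hπ c₀).lt_of_ne (Ne.symm (left_ne_zero_of_mul hc₀))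
    have hdc₀ : (Φ.submatrix c₀ id).det ≠ 0 := by
      have h' : RobustAux.Rcoef Φ c₀ ≠ 0 := right_ne_zero_of_mul hc₀
      unfold RobustAux.Rcoef at h'
      exact right_ne_zero_of_mul h'
    have hterm : ∀ c ∈ (Finset.univ : Finset (Fin d → Fin K)),
        0 ≤ (∏ a, α (c a)) * (∑ e : Fin d → Fin d, RobustAux.Scoef Φ μ v (c ∘ e)) := by
      intro c _
      rw [RobustAux.Esum_eq]
      rcases eq_or_ne ((Φ.submatrix c id).det) 0 with h | h
      · rw [h, zero_mul, mul_zero]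
      · exact mul_nonneg (hπ c) (RobustAux.sign_pos hd Φ μ k i hik hyp c h).le
    have hterm₀ : 0 < (∏ a, α (c₀ a))
        * (∑ e : Fin d → Fin d, RobustAux.Scoef Φ μ v (c₀ ∘ e)) := by
      rw [RobustAux.Esum_eq]
      exact mul_pos hπc₀ (RobustAux.sign_pos hd Φ μ k i hik hyp c₀ hdc₀)
    have hsum_pos : 0 < ∑ c : Fin d → Fin K,
        (∏ a, α (c a)) * (∑ e : Fin d → Fin d, RobustAux.Scoef Φ μ v (c ∘ e)) :=
      Finset.sum_pos' hterm ⟨c₀, Finset.mem_univ _, hterm₀⟩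
    have hNpos1 : (0:ℝ) < N₁ := by exact_mod_cast hN₁
    have hbase_pos : 0 < ∑ c : Fin d → Fin K, (∏ a, α (c a)) * RobustAux.Scoef Φ μ v c := by
      rw [e₁] at hsum_pos
      nlinarith
    have hp := RobustAux.p_expand Φ μ v α
    rw [← hp] at hbase_pos
    have hdiff : (Φ *ᵥ modelEst Φ α μ) k - (Φ *ᵥ modelEst Φ α μ) i
        = (gram Φ α).det⁻¹ * ∑ j, v j *
            ((gram Φ α).updateCol j (Φᵀ *ᵥ (Matrix.diagonal α *ᵥ μ))).det := by
      set x := (gram Φ α).adjugate *ᵥ (Φᵀ *ᵥ (Matrix.diagonal α *ᵥ μ)) with hx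
      have hcr : ∀ j, ((gram Φ α).updateCol j (Φᵀ *ᵥ (Matrix.diagonal α *ᵥ μ))).det
          = x j := by
        intro j
        rw [hx, ← Matrix.cramer_eq_adjugate_mulVec, Matrix.cramer_apply]
      have hinv : modelEst Φ α μ = (gram Φ α).det⁻¹ • x := by
        rw [hx]
        unfold modelEst
        rw [Matrix.inv_def, Ring.inverse_eq_inv, Matrix.smul_mulVec]
      simp_rw [hcr]
      rw [hinv]
      simp only [Matrix.mulVec, dotProduct, Pi.smul_apply, smul_eq_mul]
      rw [← Finset.sum_sub_distrib, Finset.mul_sum]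
      refine Finset.sum_congr rfl fun a _ => ?_
      simp only [hv]
      ring
    have hlt : 0 < (Φ *ᵥ modelEst Φ α μ) k - (Φ *ᵥ modelEst Φ α μ) i := by
      rw [hdiff]
      exact mul_pos (inv_pos.2 hdet_pos) hbase_pos
    linarith

end
end

section
/- (Lower bound on the per-instant gap in the model space.) Suppose μ ∈ ℝ^K is an interior point of the robust observation region C_k, where k is the optimal arm of μ. Then there exists Δ_min > 0 such that for every admissible sampling distribution Λ and every arm i ≠ k, one has φ_k^⊤ P^Λ(μ) − φ_i^⊤ P^Λ(μ) ≥ Δ_min. -/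
open Matrix BigOperators
open scoped Classical

noncomputable section

/-- Lower bound on the per-instant gap in the model space.
If `μ` is an interior point of the robust observation region `C_k` (where `k` is the
optimal arm of `μ`), then there is `Δ_min > 0` such that for every admissible sampling
distribution `Λ` and every arm `i ≠ k`,
`φ_kᵀ P^Λ(μ) − φ_iᵀ P^Λ(μ) ≥ Δ_min`. -/
theorem per_instant_gap_lower_bound {K d : ℕ} (hd : 0 < d) (hKd : d < K)
    (Φ : Matrix (Fin K) (Fin d) ℝ) (hrank : Φ.rank = d)
    (k : Fin K) (μ : Fin K → ℝ) (hμ : μ ∈ greedyRegion K k)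
    (hint : ∃ δ > (0 : ℝ), ∀ ξ : Fin K → ℝ,
      (∀ i, |ξ i - μ i| < δ) → ξ ∈ robustObs Φ k) :
    ∃ Δmin > (0 : ℝ), ∀ α : Fin K → ℝ, IsSimplex α → IsUnit (gram Φ α).det →
      ∀ i, i ≠ k →
        Δmin ≤ Φ.mulVec (modelEst Φ α μ) k - Φ.mulVec (modelEst Φ α μ) i := by
  by_cases hex : ∃ α : Fin K → ℝ, IsSimplex α ∧ IsUnit (gram Φ α).det
  case neg =>
    exact ⟨1, one_pos, fun α hs hu => absurd ⟨α, hs, hu⟩ hex⟩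
  case pos =>
  obtain ⟨α0, hs0, hu0⟩ := hex
  obtain ⟨δ, hδ, hC⟩ := hint
  have hμC : μ ∈ robustObs Φ k := hC μ (fun i => by simpa using hδ)
  set θ0 := modelEst Φ α0 μ with hθ0def
  have hθ0 : θ0 ∈ robustParam Φ k := hμC.2 α0 hs0 hu0
  set v := Φ.mulVec θ0 with hvdef
  have hvlt : ∀ i, i ≠ k → v i < v k := fun i hi => hθ0 i hi
  haveI : Nontrivial (Fin K) := Fin.nontrivial_iff_two_le.mpr (by omega)
  have hSne : (Finset.univ.erase k).Nonempty := by
    obtain ⟨j, hj⟩ := exists_ne k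
    exact ⟨j, Finset.mem_erase.mpr ⟨hj, Finset.mem_univ j⟩⟩
  set m := (Finset.univ.erase k).inf' hSne (fun i => v k - v i) with hmdef
  have hm : 0 < m := by
    rw [hmdef, Finset.lt_inf'_iff]
    intro b hb
    have := hvlt b (Finset.mem_erase.mp hb).1
    linarith
  set M := Finset.univ.sup' Finset.univ_nonempty (fun i : Fin K => |v i|) with hMdef
  have hM0 : 0 ≤ M := by
    rw [hMdef]
    exact le_trans (abs_nonneg (v k)) (Finset.le_sup' (fun i => |v i|) (Finset.mem_univ k))
  set t := δ / (2 * (M + 1)) with htdef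
  have ht : 0 < t := by positivity
  set ξ := μ - t • v with hξdef
  have hbound : ∀ i, |ξ i - μ i| < δ := by
    intro i
    have h1 : |v i| ≤ M := by
      rw [hMdef]; exact Finset.le_sup' (fun i => |v i|) (Finset.mem_univ i)
    have h2 : |ξ i - μ i| = t * |v i| := by
      rw [hξdef]
      simp [abs_mul, abs_of_pos ht, mul_comm]
    rw [h2]
    have h3 : t * |v i| ≤ t * M := by nlinarith
    have h4 : t * (M + 1) = δ / 2 := by
      rw [htdef]; field_simp
    nlinarith
  have hξC : ξ ∈ robustObs Φ k := hC ξ hbound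
  refine ⟨t * m, by positivity, ?_⟩
  intro α hs hu i hik
  have hproj : modelEst Φ α v = θ0 := by
    rw [hvdef]
    unfold modelEst
    rw [Matrix.mulVec_mulVec, Matrix.mulVec_mulVec, Matrix.mulVec_mulVec]
    have hone : (gram Φ α)⁻¹ * Φᵀ * Matrix.diagonal α * Φ = 1 := by
      have h2 : (gram Φ α)⁻¹ * Φᵀ * Matrix.diagonal α * Φ = (gram Φ α)⁻¹ * gram Φ α := by
        rw [_root_.gram]; simp [Matrix.mul_assoc]
      rw [h2]; exact Matrix.nonsing_inv_mul _ hu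
    rw [hone, Matrix.one_mulVec]
  have key : modelEst Φ α ξ = modelEst Φ α μ - t • θ0 := by
    rw [← hproj, hξdef]
    unfold modelEst
    simp [Matrix.mulVec_sub, Matrix.mulVec_smul]
  have hmem : modelEst Φ α ξ ∈ robustParam Φ k := hξC.2 α hs hu
  have hlt := hmem i hik
  rw [key, Matrix.mulVec_sub, Matrix.mulVec_smul] at hlt
  simp only [Pi.sub_apply, Pi.smul_apply, smul_eq_mul] at hlt
  have hmi : m ≤ v k - v i :=
    Finset.inf'_le _ (Finset.mem_erase.mpr ⟨hik, Finset.mem_univ i⟩)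
  rw [← hvdef] at hlt
  nlinarith

end
end

section
/- (Characterization of the contextual robust observation region.) For any contextual bandit instance μ with a unique optimal arm at each context, μ belongs to C^X = ⋂_{x∈X} C^x_{OPT(x)} if and only if for every index set J of d rows of Φ whose d×d row-submatrix Φ_J is invertible, the basic solution Φ_J^{-1}μ_J belongs to Θ^X = ⋂_{x∈X} Θ^x_{OPT(x)}. -/
open Matrix BigOperators
open scoped Classical

noncomputable section

variable {X A : Type*}

/-- The greedy region of arm `a` (at a fixed context): vectors in `ℝ^{|A|}` whose
(strictly) best arm is `a`. -/
def cGreedy (A : Type*) (a : A) : Set (A → ℝ) :=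
  {v | ∀ b, b ≠ a → v b < v a}

/-- The context-specific feature matrix `Φ_x`. -/
def ctxMatrix {d : ℕ} (Φ : Matrix (X × A) (Fin d) ℝ) (x : X) : Matrix A (Fin d) ℝ :=
  fun a j => Φ (x, a) j

/-- The context-specific reward vector `μ_x`. -/
def ctxReward (μ : X × A → ℝ) (x : X) : A → ℝ :=
  fun a => μ (x, a)

/-- The robust parameter region `Θ^x_a` for context `x`. -/
def cRobustParam {d : ℕ} (Φ : Matrix (X × A) (Fin d) ℝ) (x : X) (a : A) :
    Set (Fin d → ℝ) :=
  {θ | (ctxMatrix Φ x).mulVec θ ∈ cGreedy A a}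

/-- A sampling distribution over context-arm pairs: a point of the simplex `Δ_{XA}`. -/
def IsSimplexXA [Fintype X] [Fintype A] (α : X × A → ℝ) : Prop :=
  (∀ p, 0 ≤ α p) ∧ ∑ p, α p = 1

/-- The weighted Gram matrix `Φᵀ Λ Φ` with `Λ = diag α`. -/
def gramXA [Fintype X] [Fintype A] {d : ℕ} (Φ : Matrix (X × A) (Fin d) ℝ)
    (α : X × A → ℝ) : Matrix (Fin d) (Fin d) ℝ :=
  Φᵀ * Matrix.diagonal α * Φ

/-- The model estimate `P^Λ(μ) = (Φᵀ Λ Φ)⁻¹ Φᵀ Λ μ` under `Λ = diag α`. -/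
def modelEstXA [Fintype X] [Fintype A] {d : ℕ} (Φ : Matrix (X × A) (Fin d) ℝ)
    (α : X × A → ℝ) (μ : X × A → ℝ) : Fin d → ℝ :=
  (gramXA Φ α)⁻¹ *ᵥ (Φᵀ *ᵥ (Matrix.diagonal α *ᵥ μ))

/-- The robust observation region `C^x_a` for context `x` and arm `a`. -/
def cRobustObs [Fintype X] [Fintype A] {d : ℕ} (Φ : Matrix (X × A) (Fin d) ℝ)
    (x : X) (a : A) : Set (X × A → ℝ) :=
  {μ | ctxReward μ x ∈ cGreedy A a ∧
    ∀ α : X × A → ℝ, IsSimplexXA α → IsUnit (gramXA Φ α).det →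
      modelEstXA Φ α μ ∈ cRobustParam Φ x a}

section AuxLemmas
set_option linter.unusedSectionVars false

variable {β : Type*} [Fintype β] [DecidableEq β] {d : ℕ}

lemma det_expand (g : Fin d → β → ℝ) (v : β → Fin d → ℝ) :
    Matrix.det (Matrix.of fun i j => ∑ p, g i p * v p j)
      = ∑ f : Fin d → β, (∏ i, g i (f i)) * Matrix.det (Matrix.of fun k j => v (f k) j) := by
  have h : (Matrix.of fun i j => ∑ p, g i p * v p j : Matrix (Fin d) (Fin d) ℝ)
      = Matrix.of (fun i => ∑ p, g i p • v p) := by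
    ext i j
    simp [Finset.sum_apply]
  rw [h]
  have h2 := (Matrix.detRowAlternating (n := Fin d) (R := ℝ)).toMultilinearMap.map_sum
      (g := fun i p => g i p • v p)
  simp only [AlternatingMap.coe_multilinearMap] at h2
  have h3 : Matrix.det (Matrix.of fun i => ∑ p, g i p • v p)
      = Matrix.detRowAlternating (fun i => ∑ p, g i p • v p) := rfl
  rw [h3, h2]
  refine Finset.sum_congr rfl fun f _ => ?_
  have h4 := (Matrix.detRowAlternating (n := Fin d) (R := ℝ)).toMultilinearMap.map_smul_univ
      (fun i => g i (f i)) (fun i => v (f i))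
  simp only [AlternatingMap.coe_multilinearMap] at h4
  rw [h4, smul_eq_mul]
  rfl

lemma sym_expand (w : β → ℝ) (e : Fin d → β → ℝ) (v : β → Fin d → ℝ) :
    (d.factorial : ℝ) * ∑ f : Fin d → β,
        (∏ i, w (f i) * e i (f i)) * Matrix.det (Matrix.of fun k j => v (f k) j)
      = ∑ f : Fin d → β, (∏ i, w (f i)) * Matrix.det (Matrix.of fun k j => v (f k) j)
          * Matrix.det (Matrix.of fun k i => e i (f k)) := by
  have hdet : ∀ f : Fin d → β, Matrix.det (Matrix.of fun k i => e i (f k))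
      = ∑ σ : Equiv.Perm (Fin d), ((Equiv.Perm.sign σ : ℤ) : ℝ) * ∏ i, e i (f (σ i)) := by
    intro f
    rw [Matrix.det_apply']
    rfl
  calc (d.factorial : ℝ) * ∑ f : Fin d → β,
        (∏ i, w (f i) * e i (f i)) * Matrix.det (Matrix.of fun k j => v (f k) j)
      = ∑ _σ : Equiv.Perm (Fin d), ∑ f : Fin d → β,
          (∏ i, w (f i) * e i (f i)) * Matrix.det (Matrix.of fun k j => v (f k) j) := by
        rw [Finset.sum_const, Finset.card_univ, Fintype.card_perm, Fintype.card_fin,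
          nsmul_eq_mul]
    _ = ∑ σ : Equiv.Perm (Fin d), ∑ f : Fin d → β,
          (∏ i, w (f i)) * Matrix.det (Matrix.of fun k j => v (f k) j)
            * (((Equiv.Perm.sign σ : ℤ) : ℝ) * ∏ i, e i (f (σ i))) := by
        refine Finset.sum_congr rfl fun σ _ => ?_
        refine Fintype.sum_equiv (Equiv.arrowCongr σ (Equiv.refl β)) _ _ fun h => ?_
        -- (Equiv.arrowCongr σ (Equiv.refl β)) h = h ∘ σ.symm
        have hmap : ∀ k, (Equiv.arrowCongr σ (Equiv.refl β)) h k = h (σ.symm k) := by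
          intro k; simp [Equiv.arrowCongr]
        have h1 : (∏ i, w ((Equiv.arrowCongr σ (Equiv.refl β)) h i)) = ∏ i, w (h i) := by
          simp only [hmap]
          exact Equiv.prod_comp σ.symm (fun i => w (h i))
        have h2 : (∏ i, e i ((Equiv.arrowCongr σ (Equiv.refl β)) h (σ i)))
            = ∏ i, e i (h i) := by
          simp [hmap]
        have h3 : Matrix.det (Matrix.of fun k j => v (((Equiv.arrowCongr σ (Equiv.refl β)) h) k) j)
            = ((Equiv.Perm.sign σ⁻¹ : ℤ) : ℝ) * Matrix.det (Matrix.of fun k j => v (h k) j) := by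
          have := Matrix.det_permute σ⁻¹ (Matrix.of fun k j => v (h k) j)
          simp only [hmap]
          convert this using 2
          rfl
        rw [h1, h2, h3]
        have hsgn : ((Equiv.Perm.sign σ⁻¹ : ℤ) : ℝ) * ((Equiv.Perm.sign σ : ℤ) : ℝ) = 1 := by
          rcases Int.units_eq_one_or (Equiv.Perm.sign σ) with hs | hs <;>
            simp [Equiv.Perm.sign_inv, hs]
        calc (∏ i, w (h i) * e i (h i)) * Matrix.det (Matrix.of fun k j => v (h k) j)
            = (∏ i, w (h i)) * (∏ i, e i (h i))
                * Matrix.det (Matrix.of fun k j => v (h k) j) := by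
              rw [Finset.prod_mul_distrib]
          _ = (∏ i, w (h i))
                * (((Equiv.Perm.sign σ⁻¹ : ℤ) : ℝ) * Matrix.det (Matrix.of fun k j => v (h k) j))
                * (((Equiv.Perm.sign σ : ℤ) : ℝ) * ∏ i, e i (h i)) := by
              linear_combination
                (-((∏ i, w (h i)) * Matrix.det (Matrix.of fun k j => v (h k) j)
                  * (∏ i, e i (h i)))) * hsgn
    _ = ∑ f : Fin d → β, (∏ i, w (f i)) * Matrix.det (Matrix.of fun k j => v (f k) j)
          * Matrix.det (Matrix.of fun k i => e i (f k)) := by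
        rw [Finset.sum_comm]
        refine Finset.sum_congr rfl fun f _ => ?_
        rw [hdet, Finset.mul_sum]

lemma det_gram (Φ : Matrix β (Fin d) ℝ) (α : β → ℝ) :
    (d.factorial : ℝ) * (Φᵀ * Matrix.diagonal α * Φ).det
      = ∑ f : Fin d → β, (∏ i, α (f i)) * (Φ.submatrix f id).det ^ 2 := by
  have hG : Φᵀ * Matrix.diagonal α * Φ
      = Matrix.of fun i j => ∑ p, (α p * Φ p i) * Φ p j := by
    ext i j
    rw [Matrix.mul_apply]
    simp only [Matrix.mul_diagonal, Matrix.transpose_apply, Matrix.of_apply]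
    exact Finset.sum_congr rfl fun p _ => by ring
  rw [hG, det_expand (fun i p => α p * Φ p i) (fun p => Φ p)]
  have := sym_expand (d := d) α (fun i p => Φ p i) (fun p => Φ p)
  rw [this]
  refine Finset.sum_congr rfl fun f _ => ?_
  have h1 : (Matrix.of fun k j => Φ (f k) j) = Φ.submatrix f id := rfl
  have h2 : (Matrix.of fun k i => Φ (f k) i) = Φ.submatrix f id := rfl
  rw [h1]; ring

lemma det_gram_upd (Φ : Matrix β (Fin d) ℝ) (α : β → ℝ) (μ : β → ℝ) (i₀ : Fin d) :
    (d.factorial : ℝ)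
        * ((Φᵀ * Matrix.diagonal α * Φ).updateCol i₀ (Φᵀ *ᵥ (Matrix.diagonal α *ᵥ μ))).det
      = ∑ f : Fin d → β, (∏ i, α (f i)) * (Φ.submatrix f id).det
          * ((Φ.submatrix f id).updateCol i₀ (fun k => μ (f k))).det := by
  set G := Φᵀ * Matrix.diagonal α * Φ with hGdef
  have hsymm : Gᵀ = G := by
    rw [hGdef]
    rw [Matrix.transpose_mul, Matrix.transpose_mul, Matrix.transpose_transpose,
      Matrix.diagonal_transpose, Matrix.mul_assoc]
  have hupd : (G.updateCol i₀ (Φᵀ *ᵥ (Matrix.diagonal α *ᵥ μ))).det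
      = (G.updateRow i₀ (Φᵀ *ᵥ (Matrix.diagonal α *ᵥ μ))).det := by
    conv_lhs => rw [← hsymm]
    rw [Matrix.updateCol_transpose, Matrix.det_transpose]
  rw [hupd]
  have hrow : G.updateRow i₀ (Φᵀ *ᵥ (Matrix.diagonal α *ᵥ μ))
      = Matrix.of fun i j => ∑ p, (α p * (if i = i₀ then μ p else Φ p i)) * Φ p j := by
    ext i j
    rcases eq_or_ne i i₀ with h | h
    · subst h
      simp [Matrix.updateRow_apply, Matrix.mulVec, Matrix.mulVec_diagonal,
        Matrix.transpose_apply, dotProduct]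
      exact Finset.sum_congr rfl fun p _ => by ring
    · rw [Matrix.updateRow_apply, if_neg h, hGdef, Matrix.mul_apply]
      simp only [Matrix.mul_diagonal, Matrix.transpose_apply, Matrix.of_apply, if_neg h]
      exact Finset.sum_congr rfl fun p _ => by ring
  rw [hrow, det_expand (fun i p => α p * (if i = i₀ then μ p else Φ p i)) (fun p => Φ p),
    sym_expand (d := d) α (fun i p => if i = i₀ then μ p else Φ p i) (fun p => Φ p)]
  refine Finset.sum_congr rfl fun f _ => ?_
  have h1 : (Matrix.of fun k j => Φ (f k) j) = Φ.submatrix f id := rfl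
  have h2 : (Matrix.of fun k i => if i = i₀ then μ (f k) else Φ (f k) i)
      = (Φ.submatrix f id).updateCol i₀ (fun k => μ (f k)) := by
    ext k i
    simp [Matrix.updateCol_apply]
  rw [h1, h2]

lemma inv_mulVec_apply (M : Matrix (Fin d) (Fin d) ℝ) (b : Fin d → ℝ) (j : Fin d) :
    (M⁻¹ *ᵥ b) j = M.det⁻¹ * (M.updateCol j b).det := by
  rw [Matrix.inv_def, Matrix.smul_mulVec, ← Matrix.cramer_eq_adjugate_mulVec]
  simp [Ring.inverse_eq_inv, Matrix.cramer_apply]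

lemma det_submatrix_ne_zero_inj {f : Fin d → β} (Φ : Matrix β (Fin d) ℝ)
    (h : (Φ.submatrix f id).det ≠ 0) : Function.Injective f := by
  intro k k' hkk'
  by_contra hne
  exact h (Matrix.det_zero_of_row_eq hne (by
    funext j
    simp [Matrix.submatrix_apply, hkk']))

end AuxLemmas

/-- Characterization of the contextual robust observation region.
`μ ∈ C^X = ⋂_x C^x_{OPT(x)}` iff for every index set `J` of `d` rows of `Φ` (encoded as
an injective map `J : Fin d → X × A`) whose row-submatrix `Φ_J` is invertible, the basic
solution `Φ_J⁻¹ μ_J` belongs to `Θ^X = ⋂_x Θ^x_{OPT(x)}`. -/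
theorem contextual_robustObs_iff_basicSolutions [Fintype X] [Fintype A] {d : ℕ}
    (hd : 0 < d) (hA : d < Fintype.card A)
    (Φ : Matrix (X × A) (Fin d) ℝ) (hrank : Φ.rank = d)
    (μ : X × A → ℝ) (opt : X → A)
    (hopt : ∀ x : X, ∀ b : A, b ≠ opt x → μ (x, b) < μ (x, opt x)) :
    (∀ x : X, μ ∈ cRobustObs Φ x (opt x)) ↔
      (∀ J : Fin d → X × A, Function.Injective J → IsUnit (Φ.submatrix J id).det →
        ∀ x : X, (Φ.submatrix J id)⁻¹ *ᵥ (μ ∘ J) ∈ cRobustParam Φ x (opt x)) := by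

  constructor
  · -- forward: robust observation region ⟹ all basic solutions are robust parameters
    intro h J hJinj hJdet x
    set ΦJ := Φ.submatrix J id with hΦJ
    set θJ : Fin d → ℝ := ΦJ⁻¹ *ᵥ (μ ∘ J) with hθJ
    set α : X × A → ℝ := fun p => ∑ k : Fin d, if p = J k then (d : ℝ)⁻¹ else 0 with hα
    have hdne : (d : ℝ) ≠ 0 := Nat.cast_ne_zero.mpr hd.ne'
    have hred : ∀ F : X × A → ℝ, ∑ p, α p * F p = (d : ℝ)⁻¹ * ∑ k, F (J k) := by
      intro F
      simp only [hα, Finset.sum_mul, ite_mul, zero_mul]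
      rw [Finset.sum_comm, Finset.mul_sum]
      refine Finset.sum_congr rfl fun k _ => ?_
      simp [Finset.sum_ite_eq']
    have hsimplex : IsSimplexXA α := by
      constructor
      · intro p
        apply Finset.sum_nonneg
        intro k _
        split <;> positivity
      · have h1 := hred (fun _ => (1:ℝ))
        have h2 : ∑ p, α p = (d:ℝ)⁻¹ * ∑ _k : Fin d, (1:ℝ) := by
          rw [← h1]
          exact Finset.sum_congr rfl fun p _ => (mul_one _).symm
        rw [h2]
        simp [hdne]
    have hGram : gramXA Φ α = (d : ℝ)⁻¹ • (ΦJᵀ * ΦJ) := by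
      ext i j
      rw [gramXA, Matrix.mul_apply]
      simp only [Matrix.mul_diagonal, Matrix.transpose_apply]
      rw [show (∑ p, Φ p i * α p * Φ p j) = ∑ p, α p * (Φ p i * Φ p j) from
        Finset.sum_congr rfl fun p _ => by ring, hred (fun p => Φ p i * Φ p j)]
      simp [Matrix.mul_apply, Matrix.transpose_apply, Finset.mul_sum, hΦJ,
        Matrix.submatrix_apply]
    have hdetJ : ΦJ.det ≠ 0 := hJdet.ne_zero
    have hGdet : IsUnit (gramXA Φ α).det := by
      rw [hGram, Matrix.det_smul, Matrix.det_mul, Matrix.det_transpose]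
      rw [isUnit_iff_ne_zero]
      simp only [Fintype.card_fin]
      exact mul_ne_zero (pow_ne_zero _ (inv_ne_zero hdne)) (mul_ne_zero hdetJ hdetJ)
    have hcv : Φᵀ *ᵥ (Matrix.diagonal α *ᵥ μ) = gramXA Φ α *ᵥ θJ := by
      have h1 : gramXA Φ α *ᵥ θJ = (d : ℝ)⁻¹ • (ΦJᵀ *ᵥ (μ ∘ J)) := by
        rw [hGram, Matrix.smul_mulVec, hθJ, Matrix.mulVec_mulVec,
          Matrix.mul_assoc, Matrix.mul_nonsing_inv _ hJdet, Matrix.mul_one]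
      rw [h1]
      funext j
      have : (Φᵀ *ᵥ (Matrix.diagonal α *ᵥ μ)) j = ∑ p, α p * (Φ p j * μ p) := by
        rw [Matrix.mulVec]
        simp [dotProduct, Matrix.mulVec_diagonal, Matrix.transpose_apply]
        exact Finset.sum_congr rfl fun p _ => by ring
      rw [this, hred (fun p => Φ p j * μ p)]
      simp [Matrix.mulVec, dotProduct, Matrix.transpose_apply, hΦJ,
        Matrix.submatrix_apply, Function.comp]
    have hmodel : modelEstXA Φ α μ = θJ := by
      rw [modelEstXA, hcv, Matrix.mulVec_mulVec, Matrix.nonsing_inv_mul _ hGdet,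
        Matrix.one_mulVec]
    have := (h x).2 α hsimplex hGdet
    rwa [hmodel] at this
  · -- reverse: all basic solutions robust ⟹ robust observation region
    intro hB x
    refine ⟨fun b hb => hopt x b hb, ?_⟩
    intro α hα hGdet
    intro b hb
    set G := gramXA Φ α with hG
    set c := Φᵀ *ᵥ (Matrix.diagonal α *ᵥ μ) with hc
    set u : Fin d → ℝ := fun j => Φ (x, opt x) j - Φ (x, b) j with hu
    set W : (Fin d → X × A) → ℝ :=
      fun f => (∏ i, α (f i)) * (Φ.submatrix f id).det ^ 2 with hW
    have hGdd : G = Φᵀ * Matrix.diagonal α * Φ := rfl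
    have hdfac : (0 : ℝ) < (d.factorial : ℝ) := by positivity
    have hSW : (d.factorial : ℝ) * G.det = ∑ f : Fin d → X × A, W f := by
      rw [hGdd]; exact det_gram Φ α
    have hWnn : ∀ f : Fin d → X × A, 0 ≤ W f := by
      intro f
      apply mul_nonneg
      · exact Finset.prod_nonneg fun i _ => hα.1 (f i)
      · positivity
    have hGdetne : G.det ≠ 0 := hGdet.ne_zero
    have hSpos : 0 < ∑ f : Fin d → X × A, W f := by
      rcases (Finset.sum_nonneg fun f _ => hWnn f).lt_or_eq with h | h
      · exact h
      · exfalso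
        apply hGdetne
        have : (d.factorial : ℝ) * G.det = 0 := by rw [hSW, ← h]
        exact (mul_eq_zero.mp this).resolve_left hdfac.ne'
    have hGdetpos : 0 < G.det := by
      have h0 : 0 < (d.factorial : ℝ) * G.det := hSW ▸ hSpos
      nlinarith
    -- positivity of each term
    have hterm : ∀ f : Fin d → X × A, (Φ.submatrix f id).det ≠ 0 →
        0 < ∑ j, u j * ((Φ.submatrix f id)⁻¹ *ᵥ (μ ∘ f)) j := by
      intro f hdf
      have hinj : Function.Injective f := det_submatrix_ne_zero_inj Φ hdf
      have hmem := hB f hinj (isUnit_iff_ne_zero.mpr hdf) x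
      have hlt := hmem b hb
      set θf := (Φ.submatrix f id)⁻¹ *ᵥ (μ ∘ f) with hθf
      have ha' : (ctxMatrix Φ x *ᵥ θf) b < (ctxMatrix Φ x *ᵥ θf) (opt x) := hlt
      have hexp : ∀ a' : A, (ctxMatrix Φ x *ᵥ θf) a' = ∑ j, Φ (x, a') j * θf j := by
        intro a'; rfl
      rw [hexp, hexp] at ha'
      have : (0:ℝ) < ∑ j, Φ (x, opt x) j * θf j - ∑ j, Φ (x, b) j * θf j :=
        sub_pos.mpr ha'
      rw [← Finset.sum_sub_distrib] at this
      convert this using 1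
      refine Finset.sum_congr rfl fun j _ => ?_
      simp [hu]; ring
    -- main identity
    set Q : (Fin d → X × A) → ℝ := fun f => (∏ i, α (f i)) * (Φ.submatrix f id).det *
      ∑ j, u j * ((Φ.submatrix f id).updateCol j (fun k => μ (f k))).det with hQ
    have hQW : ∀ f : Fin d → X × A,
        Q f = W f * ∑ j, u j * ((Φ.submatrix f id)⁻¹ *ᵥ (μ ∘ f)) j := by
      intro f
      rcases eq_or_ne (Φ.submatrix f id).det 0 with hdf | hdf
      · simp [hQ, hW, hdf]
      · rw [hQ, hW]
        have : ∀ j, ((Φ.submatrix f id)⁻¹ *ᵥ (μ ∘ f)) j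
            = (Φ.submatrix f id).det⁻¹
              * ((Φ.submatrix f id).updateCol j (fun k => μ (f k))).det := by
          intro j
          exact inv_mulVec_apply _ _ j
        simp_rw [this]
        rw [Finset.mul_sum]
        rw [Finset.mul_sum]
        refine Finset.sum_congr rfl fun j _ => ?_
        field_simp
    have hQnn : ∀ f : Fin d → X × A, 0 ≤ Q f := by
      intro f
      rw [hQW]
      rcases eq_or_ne (Φ.submatrix f id).det 0 with hdf | hdf
      · simp [hW, hdf]
      · exact mul_nonneg (hWnn f) (hterm f hdf).le
    have hQex : ∃ f : Fin d → X × A, 0 < Q f := by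
      have : ∃ f ∈ (Finset.univ : Finset (Fin d → X × A)), 0 < W f := by
        by_contra hcon
        push_neg at hcon
        have : ∑ f : Fin d → X × A, W f ≤ 0 :=
          Finset.sum_nonpos fun f hf => hcon f hf
        linarith
      obtain ⟨f, _, hWf⟩ := this
      refine ⟨f, ?_⟩
      have hdf : (Φ.submatrix f id).det ≠ 0 := by
        intro h0
        rw [hW] at hWf
        simp [h0] at hWf
      rw [hQW]
      exact mul_pos hWf (hterm f hdf)
    have hQpos : 0 < ∑ f : Fin d → X × A, Q f :=
      Finset.sum_pos' (fun f _ => hQnn f) (hQex.imp fun f hf => ⟨Finset.mem_univ f, hf⟩)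
    -- tie Q-sum to the estimator
    have hTQ : (d.factorial : ℝ) * ∑ j, u j * (G.updateCol j c).det
        = ∑ f : Fin d → X × A, Q f := by
      rw [Finset.mul_sum]
      have : ∀ j, (d.factorial : ℝ) * (G.updateCol j c).det
          = ∑ f : Fin d → X × A, (∏ i, α (f i)) * (Φ.submatrix f id).det
              * ((Φ.submatrix f id).updateCol j (fun k => μ (f k))).det := by
        intro j
        rw [hGdd, hc]
        exact det_gram_upd Φ α μ j
      calc ∑ j, (d.factorial : ℝ) * (u j * (G.updateCol j c).det)
          = ∑ j, u j * ((d.factorial : ℝ) * (G.updateCol j c).det) := by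
            refine Finset.sum_congr rfl fun j _ => by ring
        _ = ∑ j, u j * ∑ f : Fin d → X × A, (∏ i, α (f i)) * (Φ.submatrix f id).det
              * ((Φ.submatrix f id).updateCol j (fun k => μ (f k))).det := by
            simp_rw [this]
        _ = ∑ j, ∑ f : Fin d → X × A, u j * ((∏ i, α (f i)) * (Φ.submatrix f id).det
              * ((Φ.submatrix f id).updateCol j (fun k => μ (f k))).det) := by
            exact Finset.sum_congr rfl fun j _ => Finset.mul_sum _ _ _
        _ = ∑ f : Fin d → X × A, ∑ j, u j * ((∏ i, α (f i)) * (Φ.submatrix f id).det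
              * ((Φ.submatrix f id).updateCol j (fun k => μ (f k))).det) :=
            Finset.sum_comm
        _ = ∑ f : Fin d → X × A, Q f := by
            refine Finset.sum_congr rfl fun f _ => ?_
            simp only [hQ]
            rw [Finset.mul_sum]
            exact Finset.sum_congr rfl fun j _ => by ring
    have hTpos : 0 < ∑ j, u j * (G.updateCol j c).det := by
      nlinarith [hTQ, hQpos, hdfac]
    -- final
    have hθstar : ∀ j, modelEstXA Φ α μ j = G.det⁻¹ * (G.updateCol j c).det := by
      intro j
      rw [modelEstXA]
      exact inv_mulVec_apply _ _ j
    have hfin : 0 < ∑ j, u j * modelEstXA Φ α μ j := by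
      have : ∑ j, u j * modelEstXA Φ α μ j
          = G.det⁻¹ * ∑ j, u j * (G.updateCol j c).det := by
        rw [Finset.mul_sum]
        refine Finset.sum_congr rfl fun j _ => ?_
        rw [hθstar j]; ring
      rw [this]
      exact mul_pos (inv_pos.mpr hGdetpos) hTpos
    have hexp : ∀ a' : A, (ctxMatrix Φ x *ᵥ modelEstXA Φ α μ) a'
        = ∑ j, Φ (x, a') j * modelEstXA Φ α μ j := fun a' => rfl
    show (ctxMatrix Φ x *ᵥ modelEstXA Φ α μ) b < (ctxMatrix Φ x *ᵥ modelEstXA Φ α μ) (opt x)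
    rw [hexp, hexp, ← sub_pos, ← Finset.sum_sub_distrib]
    convert hfin using 1
    refine Finset.sum_congr rfl fun j _ => ?_
    simp [hu]; ring


end
end

section
/- (Lower bound on the per-instant gap in the model space, contextual case.) Suppose the contextual bandit instance μ is an interior point of C^X = ⋂_{x∈X} C^x_{OPT(x)}. Then there exists Δ_min > 0 such that for every admissible sampling distribution Λ, every context x ∈ X, and every arm a ≠ OPT(x), one has φ(x,OPT(x))^⊤ P^Λ(μ) − φ(x,a)^⊤ P^Λ(μ) ≥ Δ_min. -/
/-!
Since `P^Λ` is a left inverse of `Φ` for every admissible `Λ`, perturbing the instance to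
`μ - ε Φ w` with `w = φ(x, OPT(x)) - φ(x, a)` moves every model estimate `P^Λ(μ)` to
`P^Λ(μ) - ε w`, and so lowers the gap `wᵀ P^Λ(μ)` by exactly `ε ‖w‖²`, uniformly in `Λ`.
For `ε` small the perturbed instance still lies in `C^X`, where the gap is positive; hence
`wᵀ P^Λ(μ) > ε ‖w‖²` for all admissible `Λ`, and the minimum of these bounds over the finitely
many pairs `(x, a)` is `Δ_min`.
-/

open Matrix BigOperators
open scoped Classical

noncomputable section

variable {X A : Type*}

open Filter Topology

theorem sub_dotProduct_pos_of_mem_cRobustParam {d : ℕ} {Φ : Matrix (X × A) (Fin d) ℝ} {x : X}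
    {a b : A} {θ : Fin d → ℝ} (hθ : θ ∈ cRobustParam Φ x b) (hab : a ≠ b) :
    0 < (Φ (x, b) - Φ (x, a)) ⬝ᵥ θ := by
  rw [sub_dotProduct, sub_pos]
  exact hθ a hab

section Perturbation

variable [Fintype X] [Fintype A] {d : ℕ} {Φ : Matrix (X × A) (Fin d) ℝ} {α : X × A → ℝ}

theorem modelEstXA_sub_mulVec (hdet : IsUnit (gramXA Φ α).det) (μ : X × A → ℝ)
    (v : Fin d → ℝ) : modelEstXA Φ α (μ - Φ *ᵥ v) = modelEstXA Φ α μ - v := by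
  have hv : (gramXA Φ α)⁻¹ *ᵥ (Φᵀ *ᵥ (diagonal α *ᵥ (Φ *ᵥ v))) = v := by
    simp only [mulVec_mulVec, ← Matrix.mul_assoc]
    rw [Matrix.mul_assoc _ Φᵀ, Matrix.mul_assoc, show Φᵀ * diagonal α * Φ = gramXA Φ α from rfl,
      nonsing_inv_mul _ hdet, one_mulVec]
  simp only [modelEstXA, mulVec_sub, hv]

theorem mul_dotProduct_self_lt_of_sub_mem_cRobustObs {μ : X × A → ℝ} {x : X} {a b : A}
    (hab : a ≠ b) (hα : IsSimplexXA α) (hdet : IsUnit (gramXA Φ α).det) {ε : ℝ}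
    (hmem : μ - Φ *ᵥ (ε • (Φ (x, b) - Φ (x, a))) ∈ cRobustObs Φ x b) :
    ε * ((Φ (x, b) - Φ (x, a)) ⬝ᵥ (Φ (x, b) - Φ (x, a))) <
      (Φ (x, b) - Φ (x, a)) ⬝ᵥ modelEstXA Φ α μ := by
  have hgap := sub_dotProduct_pos_of_mem_cRobustParam (hmem.2 α hα hdet) hab
  rw [modelEstXA_sub_mulVec hdet, dotProduct_sub, dotProduct_smul, smul_eq_mul] at hgap
  linarith

end Perturbation

theorem eventually_le_dotProduct_of_eventually_lt {n ι : Type*} [Fintype n] {w : n → ℝ}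
    {θ : ι → n → ℝ} {P : ι → Prop}
    (h : ∀ᶠ ε in 𝓝 (0 : ℝ), ∀ i, P i → ε * (w ⬝ᵥ w) < w ⬝ᵥ θ i) :
    ∀ᶠ c in 𝓝[>] 0, ∀ i, P i → c ≤ w ⬝ᵥ θ i := by
  rcases eq_or_ne w 0 with rfl | hw
  -- at `ε = 0` the hypothesis reads `0 < 0` for every `i` with `P i`, so there is no such `i`
  · refine .of_forall fun c i hi => ?_
    simpa using h.self_of_nhds i hi
  obtain ⟨ε, hε, hεpos⟩ := ((h.filter_mono nhdsWithin_le_nhds).and self_mem_nhdsWithin).exists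
    (f := 𝓝[>] (0 : ℝ))
  have hpos : 0 < ε * (w ⬝ᵥ w) := mul_pos hεpos (dotProduct_self_star_pos_iff.mpr hw)
  exact ((eventually_le_nhds hpos).filter_mono nhdsWithin_le_nhds).mono
    fun c hc i hi => hc.trans (hε i hi).le

theorem eventually_nhds_of_forall_abs_sub_lt {ι : Type*} [Fintype ι] {μ : ι → ℝ}
    {P : (ι → ℝ) → Prop} (h : ∃ δ > 0, ∀ ξ, (∀ i, |ξ i - μ i| < δ) → P ξ) :
    ∀ᶠ ξ in 𝓝 μ, P ξ := by
  obtain ⟨δ, hδ, hP⟩ := h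
  refine Metric.eventually_nhds_iff.mpr ⟨δ, hδ, fun ξ hξ => hP ξ fun i => ?_⟩
  rw [← Real.dist_eq]
  exact (dist_pi_lt_iff hδ).mp hξ i

theorem eventually_le_gap_of_eventually_mem_cRobustObs [Fintype X] [Fintype A] {d : ℕ}
    {Φ : Matrix (X × A) (Fin d) ℝ} {μ : X × A → ℝ} {x : X} {a b : A} (hab : a ≠ b)
    (hC : ∀ᶠ ξ in 𝓝 μ, ξ ∈ cRobustObs Φ x b) :
    ∀ᶠ c in 𝓝[>] 0, ∀ α, IsSimplexXA α → IsUnit (gramXA Φ α).det →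
      c ≤ Φ (x, b) ⬝ᵥ modelEstXA Φ α μ - Φ (x, a) ⬝ᵥ modelEstXA Φ α μ := by
  set w := Φ (x, b) - Φ (x, a)
  have hcont : Continuous fun ε : ℝ => μ - Φ *ᵥ (ε • w) := by
    simp only [mulVec_smul]
    fun_prop
  have hpert : ∀ᶠ ε in 𝓝 (0 : ℝ), μ - Φ *ᵥ (ε • w) ∈ cRobustObs Φ x b :=
    hcont.tendsto' 0 μ (by simp) |>.eventually hC
  simp only [← sub_dotProduct]
  exact eventually_le_dotProduct_of_eventually_lt (P := fun α => _ ∧ _)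
    (hpert.mono fun ε hε α hα => mul_dotProduct_self_lt_of_sub_mem_cRobustObs hab hα.1 hα.2 hε)
    |>.mono fun c hc α hα hdet => hc α ⟨hα, hdet⟩

theorem contextual_per_instant_gap_lower_bound_general [Fintype X] [Fintype A] {d : ℕ}
    (Φ : Matrix (X × A) (Fin d) ℝ)
    (μ : X × A → ℝ) (opt : X → A)
    (hint : ∃ δ > (0 : ℝ), ∀ ξ : X × A → ℝ,
      (∀ p, |ξ p - μ p| < δ) → ∀ x : X, ξ ∈ cRobustObs Φ x (opt x)) :
    ∃ Δmin > (0 : ℝ), ∀ α : X × A → ℝ, IsSimplexXA α → IsUnit (gramXA Φ α).det →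
      ∀ x : X, ∀ a : A, a ≠ opt x →
        Δmin ≤ Φ (x, opt x) ⬝ᵥ modelEstXA Φ α μ - Φ (x, a) ⬝ᵥ modelEstXA Φ α μ := by
  have hC := eventually_nhds_of_forall_abs_sub_lt hint
  have hgap : ∀ᶠ c in 𝓝[>] 0, ∀ x a, a ≠ opt x → ∀ α, IsSimplexXA α →
      IsUnit (gramXA Φ α).det →
        c ≤ Φ (x, opt x) ⬝ᵥ modelEstXA Φ α μ - Φ (x, a) ⬝ᵥ modelEstXA Φ α μ := by
    simp only [eventually_all]
    exact fun x a ha => eventually_le_gap_of_eventually_mem_cRobustObs ha (hC.mono fun ξ h => h x)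
  obtain ⟨c, hc, hcpos⟩ := (hgap.and self_mem_nhdsWithin).exists
  exact ⟨c, hcpos, fun α hα hdet x a ha => hc x a ha α hα hdet⟩

/-- Lower bound on the per-instant gap in the model space,
contextual case.  If `μ` is an interior point of `C^X = ⋂_x C^x_{OPT(x)}`, then there
is `Δ_min > 0` such that for every admissible sampling distribution `Λ`, every context
`x` and every arm `a ≠ OPT(x)`,
`φ(x,OPT(x))ᵀ P^Λ(μ) − φ(x,a)ᵀ P^Λ(μ) ≥ Δ_min`. -/
theorem contextual_per_instant_gap_lower_bound [Fintype X] [Fintype A] {d : ℕ}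
    (hd : 0 < d) (hA : d < Fintype.card A)
    (Φ : Matrix (X × A) (Fin d) ℝ) (hrank : Φ.rank = d)
    (μ : X × A → ℝ) (opt : X → A)
    (hopt : ∀ x : X, ∀ b : A, b ≠ opt x → μ (x, b) < μ (x, opt x))
    (hint : ∃ δ > (0 : ℝ), ∀ ξ : X × A → ℝ,
      (∀ p, |ξ p - μ p| < δ) → ∀ x : X, ξ ∈ cRobustObs Φ x (opt x)) :
    ∃ Δmin > (0 : ℝ), ∀ α : X × A → ℝ, IsSimplexXA α → IsUnit (gramXA Φ α).det →
      ∀ x : X, ∀ a : A, a ≠ opt x →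
        Δmin ≤ Φ (x, opt x) ⬝ᵥ modelEstXA Φ α μ - Φ (x, a) ⬝ᵥ modelEstXA Φ α μ :=
  contextual_per_instant_gap_lower_bound_general Φ μ opt hint

end
end

section
/- For the 3×2 feature matrix Φ with rows (2,3), (4,5), (2,1), the robust observation region of arm 1 is C_1 = {μ ∈ ℝ³ : μ_1 > μ_2/2 and μ_1 > μ_2 and μ_2 > 2μ_3 and μ_2 < −μ_3 and μ_1 > μ_3 and μ_1 < −μ_3}. -/
open Matrix BigOperators
open scoped Classical

noncomputable section

lemma inv_mulVec_fin_two (A : Matrix (Fin 2) (Fin 2) ℝ) (hd : A.det ≠ 0) (v : Fin 2 → ℝ) :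
    A⁻¹ *ᵥ v = ![(A 1 1 * v 0 - A 0 1 * v 1)/A.det, (A 0 0 * v 1 - A 1 0 * v 0)/A.det] := by
  rw [Matrix.inv_def, Matrix.adjugate_fin_two]
  funext i
  fin_cases i <;>
    simp [Matrix.mulVec, dotProduct, Ring.inverse_eq_inv', Fin.sum_univ_two] <;>
    field_simp <;> ring

lemma gram_eq (α : Fin 3 → ℝ) :
    gram (!![2,3;4,5;2,1] : Matrix (Fin 3) (Fin 2) ℝ) α =
      !![4*α 0+16*α 1+4*α 2, 6*α 0+20*α 1+2*α 2; 6*α 0+20*α 1+2*α 2, 9*α 0+25*α 1+α 2] := by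
  ext i j
  fin_cases i <;> fin_cases j <;>
    simp [_root_.gram, Matrix.mul_apply, Matrix.mul_diagonal, Matrix.transpose_apply,
      Matrix.vecHead, Matrix.vecTail, Function.comp, Fin.sum_univ_three] <;> ring

lemma det_gram_eq (α : Fin 3 → ℝ) :
    (gram (!![2,3;4,5;2,1] : Matrix (Fin 3) (Fin 2) ℝ) α).det =
      4*(α 0*α 1) + 16*(α 0*α 2) + 36*(α 1*α 2) := by
  rw [gram_eq, Matrix.det_fin_two_of]; ring

lemma vvec_eq (α μ : Fin 3 → ℝ) :
    (!![2,3;4,5;2,1] : Matrix (Fin 3) (Fin 2) ℝ)ᵀ *ᵥ (Matrix.diagonal α *ᵥ μ) =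
      ![2*α 0*μ 0+4*α 1*μ 1+2*α 2*μ 2, 3*α 0*μ 0+5*α 1*μ 1+α 2*μ 2] := by
  funext i
  fin_cases i <;>
    simp [Matrix.mulVec, dotProduct, Matrix.diagonal, Matrix.transpose_apply,
      Fin.sum_univ_three] <;> ring

lemma mem_robustParam_iff (θ : Fin 2 → ℝ) :
    θ ∈ robustParam (!![2,3;4,5;2,1] : Matrix (Fin 3) (Fin 2) ℝ) 0 ↔
      (θ 0 + θ 1 < 0 ∧ 0 < θ 1) := by
  constructor
  · intro h
    have h1 := h 1 (by decide)
    have h2 := h 2 (by decide)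
    simp [Matrix.mulVec, dotProduct, Fin.sum_univ_two] at h1 h2
    constructor <;> linarith
  · rintro ⟨h1, h2⟩ i hi
    fin_cases i
    · exact absurd rfl hi
    all_goals simp [Matrix.mulVec, dotProduct, Fin.sum_univ_two]; linarith

/-- Master computational lemma. -/
lemma key (α μ : Fin 3 → ℝ) (hs : IsSimplex α)
    (hu : (gram (!![2,3;4,5;2,1] : Matrix (Fin 3) (Fin 2) ℝ) α).det ≠ 0) :
    modelEst (!![2,3;4,5;2,1] : Matrix (Fin 3) (Fin 2) ℝ) α μ ∈
        robustParam (!![2,3;4,5;2,1] : Matrix (Fin 3) (Fin 2) ℝ) 0 ↔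
      (0 < 4*(α 0*α 1)*(2*μ 0-μ 1) + 8*(α 0*α 2)*(μ 0-μ 2) + 12*(α 1*α 2)*(μ 1-2*μ 2) ∧
       2*(α 0*α 1)*(μ 1-μ 0) + 4*(α 0*α 2)*(μ 0+μ 2) + 6*(α 1*α 2)*(μ 1+μ 2) < 0) := by
  have hab : 0 ≤ α 0 * α 1 := mul_nonneg (hs.1 0) (hs.1 1)
  have hac : 0 ≤ α 0 * α 2 := mul_nonneg (hs.1 0) (hs.1 2)
  have hbc : 0 ≤ α 1 * α 2 := mul_nonneg (hs.1 1) (hs.1 2)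
  have hD : 0 < (gram (!![2,3;4,5;2,1] : Matrix (Fin 3) (Fin 2) ℝ) α).det := by
    rcases lt_or_eq_of_le (by rw [det_gram_eq]; positivity :
      (0:ℝ) ≤ (gram (!![2,3;4,5;2,1] : Matrix (Fin 3) (Fin 2) ℝ) α).det) with h | h
    · exact h
    · exact absurd h.symm hu
  rw [mem_robustParam_iff]
  unfold modelEst
  rw [vvec_eq, inv_mulVec_fin_two _ hu]
  rw [gram_eq] at hD ⊢
  simp only [Matrix.cons_val_zero, Matrix.cons_val_one, Matrix.head_cons, Matrix.head_fin_const,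
    Matrix.cons_val', Matrix.empty_val', Matrix.cons_val_fin_one, Matrix.of_apply]
  rw [← add_div, div_lt_iff₀ hD, lt_div_iff₀ hD, zero_mul]
  constructor <;> rintro ⟨h1, h2⟩ <;> constructor <;> nlinarith [h1, h2]

/-- For the `3 × 2` feature matrix `Φ` with rows `(2,3), (4,5), (2,1)`,
the robust observation region of arm `1` is
`C_1 = {μ ∈ ℝ³ : μ₁ > μ₂/2, μ₁ > μ₂, μ₂ > 2μ₃, μ₂ < −μ₃, μ₁ > μ₃, μ₁ < −μ₃}`. -/
theorem example_bandit_robust_observation_region :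
    let Φ : Matrix (Fin 3) (Fin 2) ℝ := !![2, 3; 4, 5; 2, 1]
    robustObs Φ 0 = {μ : Fin 3 → ℝ |
      μ 1 / 2 < μ 0 ∧ μ 1 < μ 0 ∧ 2 * μ 2 < μ 1 ∧ μ 1 < -μ 2 ∧ μ 2 < μ 0 ∧ μ 0 < -μ 2} := by
  intro Φ
  rw [show Φ = !![2, 3; 4, 5; 2, 1] from rfl]
  ext μ
  simp only [robustObs, Set.mem_setOf_eq]
  constructor
  · rintro ⟨hg, hall⟩
    have s1 : IsSimplex (![1/2, 1/2, 0] : Fin 3 → ℝ) := by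
      refine ⟨fun i => by fin_cases i <;> norm_num [Matrix.cons_val_two], by norm_num [Fin.sum_univ_three, Matrix.cons_val_two]⟩
    have s2 : IsSimplex (![1/2, 0, 1/2] : Fin 3 → ℝ) := by
      refine ⟨fun i => by fin_cases i <;> norm_num [Matrix.cons_val_two], by norm_num [Fin.sum_univ_three, Matrix.cons_val_two]⟩
    have s3 : IsSimplex (![0, 1/2, 1/2] : Fin 3 → ℝ) := by
      refine ⟨fun i => by fin_cases i <;> norm_num [Matrix.cons_val_two], by norm_num [Fin.sum_univ_three, Matrix.cons_val_two]⟩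
    have u1 : IsUnit (gram (!![2,3;4,5;2,1] : Matrix (Fin 3) (Fin 2) ℝ)
        (![1/2, 1/2, 0] : Fin 3 → ℝ)).det := by
      rw [det_gram_eq]; norm_num [Matrix.cons_val_two]
    have u2 : IsUnit (gram (!![2,3;4,5;2,1] : Matrix (Fin 3) (Fin 2) ℝ)
        (![1/2, 0, 1/2] : Fin 3 → ℝ)).det := by
      rw [det_gram_eq]; norm_num [Matrix.cons_val_two]
    have u3 : IsUnit (gram (!![2,3;4,5;2,1] : Matrix (Fin 3) (Fin 2) ℝ)
        (![0, 1/2, 1/2] : Fin 3 → ℝ)).det := by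
      rw [det_gram_eq]; norm_num [Matrix.cons_val_two]
    have k1 := (key _ μ s1 u1.ne_zero).mp (hall _ s1 u1)
    have k2 := (key _ μ s2 u2.ne_zero).mp (hall _ s2 u2)
    have k3 := (key _ μ s3 u3.ne_zero).mp (hall _ s3 u3)
    norm_num [Matrix.cons_val_two] at k1 k2 k3
    obtain ⟨k1a, k1b⟩ := k1
    obtain ⟨k2a, k2b⟩ := k2
    obtain ⟨k3a, k3b⟩ := k3
    refine ⟨by linarith, by linarith, by linarith, by linarith, by linarith, by linarith⟩
  · rintro ⟨h1, h2, h3, h4, h5, h6⟩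
    refine ⟨?_, ?_⟩
    · intro i hi
      fin_cases i
      · exact absurd rfl hi
      · exact h2
      · exact h5
    · intro α hs hu
      rw [key α μ hs hu.ne_zero]
      have hab : 0 ≤ α 0 * α 1 := mul_nonneg (hs.1 0) (hs.1 1)
      have hac : 0 ≤ α 0 * α 2 := mul_nonneg (hs.1 0) (hs.1 2)
      have hbc : 0 ≤ α 1 * α 2 := mul_nonneg (hs.1 1) (hs.1 2)
      have hD : (0:ℝ) < 4*(α 0*α 1) + 16*(α 0*α 2) + 36*(α 1*α 2) := by
        rcases lt_or_eq_of_le (by positivity :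
            (0:ℝ) ≤ 4*(α 0*α 1) + 16*(α 0*α 2) + 36*(α 1*α 2)) with h | h
        · exact h
        · exact absurd (by rw [det_gram_eq]; linarith) hu.ne_zero
      have hpos : 0 < α 0 * α 1 ∨ 0 < α 0 * α 2 ∨ 0 < α 1 * α 2 := by
        by_contra hc
        push_neg at hc
        obtain ⟨c1, c2, c3⟩ := hc
        linarith
      have t1 : 0 ≤ (α 0 * α 1) * (2*μ 0 - μ 1) := mul_nonneg hab (by linarith)
      have t2 : 0 ≤ (α 0 * α 2) * (μ 0 - μ 2) := mul_nonneg hac (by linarith)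
      have t3 : 0 ≤ (α 1 * α 2) * (μ 1 - 2*μ 2) := mul_nonneg hbc (by linarith)
      have s1 : (α 0 * α 1) * (μ 1 - μ 0) ≤ 0 :=
        mul_nonpos_of_nonneg_of_nonpos hab (by linarith)
      have s2 : (α 0 * α 2) * (μ 0 + μ 2) ≤ 0 :=
        mul_nonpos_of_nonneg_of_nonpos hac (by linarith)
      have s3 : (α 1 * α 2) * (μ 1 + μ 2) ≤ 0 :=
        mul_nonpos_of_nonneg_of_nonpos hbc (by linarith)
      rcases hpos with hp | hp | hp
      · have p1 : 0 < (α 0 * α 1) * (2*μ 0 - μ 1) := mul_pos hp (by linarith)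
        have q1 : (α 0 * α 1) * (μ 1 - μ 0) < 0 := mul_neg_of_pos_of_neg hp (by linarith)
        exact ⟨by nlinarith, by nlinarith⟩
      · have p1 : 0 < (α 0 * α 2) * (μ 0 - μ 2) := mul_pos hp (by linarith)
        have q1 : (α 0 * α 2) * (μ 0 + μ 2) < 0 := mul_neg_of_pos_of_neg hp (by linarith)
        exact ⟨by nlinarith, by nlinarith⟩
      · have p1 : 0 < (α 1 * α 2) * (μ 1 - 2*μ 2) := mul_pos hp (by linarith)
        have q1 : (α 1 * α 2) * (μ 1 + μ 2) < 0 := mul_neg_of_pos_of_neg hp (by linarith)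
        exact ⟨by nlinarith, by nlinarith⟩

end
end
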